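/- arXiv:2403.18410 — 8 statements merged into one kernel-verified Lean document; each statement's English description precedes it below -/
import Mathlib

section
/- Let m ≥ 1 be an integer and let f : ℝ → ℝ be a 2π-periodic function. Assume f is (m−1)-times continuously differentiable on ℝ, and that there is a partition 0 = θ₀ < θ₁ < ⋯ < θ_N = 2π such that for each j the restriction of f to [θ_{j−1}, θ_j] coincides with the restriction of a function that is (m+1)-times continuously differentiable on an open neighborhood of [θ_{j−1}, θ_j]. Then there exists a constant M ≥ 0 such that for every nonzero integer k, |∫₀^{2π} f(θ)·e^{−i k θ} dθ| ≤ M / |k|^{m+1}. -/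
open Real MeasureTheory intervalIntegral
open scoped Topology

namespace Stmt0Aux

lemma hasDerivAt_cexp_mul (c : ℂ) (t : ℝ) :
    HasDerivAt (fun s : ℝ => Complex.exp (c * s)) (c * Complex.exp (c * t)) t := by
  have h1 : HasDerivAt (fun z : ℂ => Complex.exp (c * z)) (c * Complex.exp (c * t)) (t : ℂ) := by
    have := ((hasDerivAt_id (t : ℂ)).const_mul c).cexp
    simpa [mul_comm] using this
  exact h1.comp_ofReal

lemma ibp_step (c : ℂ) (hc : c ≠ 0) (a b : ℝ) (F F' : ℝ → ℂ)
    (hF : ∀ t ∈ Set.uIcc a b, HasDerivAt F (F' t) t)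
    (hF' : ContinuousOn F' (Set.uIcc a b)) :
    (∫ t in a..b, F t * Complex.exp (c * t))
      = (F b * Complex.exp (c * b) - F a * Complex.exp (c * a)) / c
        - c⁻¹ * ∫ t in a..b, F' t * Complex.exp (c * t) := by
  have hv : ∀ t ∈ Set.uIcc a b,
      HasDerivAt (fun s : ℝ => Complex.exp (c * s) / c) (Complex.exp (c * t)) t := by
    intro t _
    simpa [mul_div_cancel_left₀ _ hc] using (hasDerivAt_cexp_mul c t).div_const c
  have hu' : IntervalIntegrable F' volume a b := hF'.intervalIntegrable
  have hv' : IntervalIntegrable (fun t : ℝ => Complex.exp (c * t)) volume a b := by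
    apply Continuous.intervalIntegrable; fun_prop
  have key := intervalIntegral.integral_mul_deriv_eq_deriv_mul hF hv hu' hv'
  rw [key]
  have : (∫ t in a..b, F' t * (Complex.exp (c * t) / c))
      = (∫ t in a..b, F' t * Complex.exp (c * t)) / c := by
    simp_rw [← mul_div_assoc]
    exact intervalIntegral.integral_div c _
  rw [this]
  field_simp

lemma ibp_iter (c : ℂ) (hc : c ≠ 0) (a b : ℝ) (n : ℕ) (G : ℕ → ℝ → ℂ)
    (hd : ∀ r < n, ∀ t ∈ Set.uIcc a b, HasDerivAt (G r) (G (r + 1) t) t)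
    (hcont : ∀ r ≤ n, ContinuousOn (G r) (Set.uIcc a b)) :
    (∫ t in a..b, G 0 t * Complex.exp (c * t))
      = (∑ r ∈ Finset.range n, (-1 : ℂ) ^ r *
          ((G r b * Complex.exp (c * b) - G r a * Complex.exp (c * a)) / c ^ (r + 1)))
        + (-1) ^ n * (c⁻¹) ^ n * ∫ t in a..b, G n t * Complex.exp (c * t) := by
  induction n with
  | zero => simp
  | succ n ih =>
    rw [ih (fun r hr => hd r (hr.trans n.lt_succ_self)) (fun r hr => hcont r (hr.trans n.le_succ)),
      ibp_step c hc a b (G n) (G (n + 1)) (hd n n.lt_succ_self) (hcont (n + 1) le_rfl),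
      Finset.sum_range_succ]
    ring

lemma iteratedDerivWithin_isOpen' {U : Set ℝ} (hU : IsOpen U) {x : ℝ} (hx : x ∈ U)
    (n : ℕ) (g : ℝ → ℂ) : iteratedDerivWithin n g U x = iteratedDeriv n g x := by
  rw [iteratedDerivWithin_eq_iteratedFDerivWithin, iteratedDeriv_eq_iteratedFDeriv,
    iteratedFDerivWithin_of_isOpen n hU hx]

lemma periodic_iteratedDeriv {F : ℝ → ℂ} {c : ℝ} (h : Function.Periodic F c) (r : ℕ) :
    Function.Periodic (iteratedDeriv r F) c := by
  intro x
  have h2 : (fun y => F (y + c)) = F := funext h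
  calc iteratedDeriv r F (x + c) = iteratedDeriv r (fun y => F (y + c)) x := by
        rw [iteratedDeriv_comp_add_const]
    _ = iteratedDeriv r F x := by rw [h2]

end Stmt0Aux

open Stmt0Aux in
/-- Fourier decay for piecewise `C^m` periodic functions: if `f` is `2π`-periodic, globally
`C^{m-1}`, and on each piece of a finite partition `0 = θ₀ < ⋯ < θ_N = 2π` it agrees with a
function that is `C^{m+1}` on an open neighborhood of the piece, then there is `M ≥ 0` with
`|∫₀^{2π} f(θ) e^{-ikθ} dθ| ≤ M / |k|^{m+1}` for every nonzero integer `k`. -/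
theorem stmt_0 (m : ℕ) (hm : 1 ≤ m) (f : ℝ → ℝ)
    (hper : Function.Periodic f (2 * π))
    (hsmooth : ContDiff ℝ ((m - 1 : ℕ) : ℕ∞) f)
    (N : ℕ) (hN : 1 ≤ N) (θ : ℕ → ℝ)
    (hθ0 : θ 0 = 0) (hθN : θ N = 2 * π)
    (hmono : ∀ j < N, θ j < θ (j + 1))
    (hpiece : ∀ j < N, ∃ (U : Set ℝ) (g : ℝ → ℝ), IsOpen U ∧
      Set.Icc (θ j) (θ (j + 1)) ⊆ U ∧ ContDiffOn ℝ ((m + 1 : ℕ) : ℕ∞) g U ∧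
      Set.EqOn f g (Set.Icc (θ j) (θ (j + 1)))) :
    ∃ M : ℝ, 0 ≤ M ∧ ∀ k : ℤ, k ≠ 0 →
      ‖∫ t in (0 : ℝ)..(2 * π),
          (f t : ℂ) * Complex.exp (-Complex.I * (k : ℂ) * (t : ℂ))‖
        ≤ M / |(k : ℝ)| ^ (m + 1) := by
  classical
  choose U g hUopen hUsub hgsmooth hfg using hpiece
  -- complexifications
  set Fc : ℝ → ℂ := fun t => ((f t : ℝ) : ℂ) with hFc
  have hFcsmooth : ContDiff ℝ ((m - 1 : ℕ) : ℕ∞) Fc :=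
    Complex.ofRealCLM.contDiff.comp hsmooth
  have hFcper : Function.Periodic Fc (2 * π) := fun x => by simp [hFc, hper x]
  -- the complexified pieces and their iterated derivatives
  set Gc : ∀ j, j < N → ℝ → ℂ := fun j hj t => ((g j hj t : ℝ) : ℂ) with hGc
  have hGcsmooth : ∀ j (hj : j < N), ContDiffOn ℝ ((m + 1 : ℕ) : ℕ∞) (Gc j hj) (U j hj) :=
    fun j hj => Complex.ofRealCLM.contDiff.comp_contDiffOn (hgsmooth j hj)
  set D : ∀ j, j < N → ℕ → ℝ → ℂ :=
    fun j hj r => iteratedDerivWithin r (Gc j hj) (U j hj) with hD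
  -- the constant
  set M : ℝ := ∑ j ∈ Finset.range N, (if hj : j < N then
      ‖D j hj m (θ j)‖ + ‖D j hj m (θ (j + 1))‖ +
        ∫ t in θ j..θ (j + 1), ‖D j hj (m + 1) t‖ else 0) with hM
  have hθle : ∀ j (hj : j < N), θ j ≤ θ (j + 1) := fun j hj => (hmono j hj).le
  have hMnonneg : 0 ≤ M := by
    apply Finset.sum_nonneg
    intro j hjr
    have hj : j < N := Finset.mem_range.mp hjr
    rw [dif_pos hj]
    have hint : 0 ≤ ∫ t in θ j..θ (j + 1), ‖D j hj (m + 1) t‖ :=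
      intervalIntegral.integral_nonneg (hθle j hj) (fun t _ => norm_nonneg _)
    positivity
  refine ⟨M, hMnonneg, ?_⟩
  intro k hk
  set c : ℂ := -Complex.I * (k : ℂ) with hc
  have hcne : c ≠ 0 :=
    mul_ne_zero (neg_ne_zero.mpr Complex.I_ne_zero) (Int.cast_ne_zero.mpr hk)
  have habs_c : ‖c‖ = |(k : ℝ)| := by
    simp [hc, Complex.norm_intCast]
  have hEabs : ∀ t : ℝ, ‖Complex.exp (c * t)‖ = 1 := by
    intro t
    have : c * (t : ℂ) = ((-(k * t) : ℝ) : ℂ) * Complex.I := by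
      push_cast [hc]; ring
    rw [this, Complex.norm_exp_ofReal_mul_I]
  have hfcont : Continuous f := hsmooth.continuous
  -- uIcc facts
  have huIcc : ∀ j (hj : j < N), Set.uIcc (θ j) (θ (j + 1)) = Set.Icc (θ j) (θ (j + 1)) :=
    fun j hj => Set.uIcc_of_le (hθle j hj)
  have hsubU : ∀ j (hj : j < N), Set.uIcc (θ j) (θ (j + 1)) ⊆ U j hj := by
    intro j hj; rw [huIcc j hj]; exact hUsub j hj
  -- derivative chain facts
  have hchain : ∀ j (hj : j < N), ∀ r < m + 1, ∀ t ∈ Set.uIcc (θ j) (θ (j + 1)),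
      HasDerivAt (D j hj r) (D j hj (r + 1) t) t := by
    intro j hj r hr t ht
    have htU : t ∈ U j hj := hsubU j hj ht
    have h1 : DifferentiableWithinAt ℝ (D j hj r) (U j hj) t := by
      apply (hGcsmooth j hj).differentiableOn_iteratedDerivWithin _
        (hUopen j hj).uniqueDiffOn t htU
      exact_mod_cast hr
    have h2 := (h1.differentiableAt ((hUopen j hj).mem_nhds htU)).hasDerivAt
    have h3 : D j hj (r + 1) t = deriv (D j hj r) t := by
      show iteratedDerivWithin (r + 1) (Gc j hj) (U j hj) t
        = deriv (iteratedDerivWithin r (Gc j hj) (U j hj)) t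
      rw [iteratedDerivWithin_succ,
        derivWithin_of_isOpen (hUopen j hj) htU]
    rw [h3]; exact h2
  have hDcont : ∀ j (hj : j < N), ∀ r ≤ m + 1,
      ContinuousOn (D j hj r) (Set.uIcc (θ j) (θ (j + 1))) := by
    intro j hj r hr
    refine ((hGcsmooth j hj).continuousOn_iteratedDerivWithin ?_
      (hUopen j hj).uniqueDiffOn).mono (hsubU j hj)
    exact_mod_cast hr
  -- boundary equalities up to order m - 1
  have hbd : ∀ j (hj : j < N), ∀ r < m, ∀ x ∈ Set.Icc (θ j) (θ (j + 1)),
      D j hj r x = iteratedDeriv r Fc x := by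
    intro j hj r hr x hx
    have hrm : r ≤ m - 1 := Nat.le_pred_of_lt hr
    have hcF : Continuous (iteratedDeriv r Fc) := by
      apply hFcsmooth.continuous_iteratedDeriv r
      exact_mod_cast hrm
    have heqIoo : ∀ y ∈ Set.Ioo (θ j) (θ (j + 1)), D j hj r y = iteratedDeriv r Fc y := by
      intro y hy
      have hyIcc : y ∈ Set.Icc (θ j) (θ (j + 1)) := Set.Ioo_subset_Icc_self hy
      show iteratedDerivWithin r (Gc j hj) (U j hj) y = iteratedDeriv r Fc y
      rw [iteratedDerivWithin_isOpen' (hUopen j hj) (hUsub j hj hyIcc) r]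
      refine (Filter.EventuallyEq.iteratedDeriv_eq r ?_).symm
      filter_upwards [Icc_mem_nhds hy.1 hy.2] with z hz
      simp [hFc, hGc, hfg j hj hz]
    have hxcl : x ∈ closure (Set.Ioo (θ j) (θ (j + 1))) := by
      rwa [closure_Ioo (hmono j hj).ne]
    have hne : (𝓝[Set.Ioo (θ j) (θ (j + 1))] x).NeBot :=
      mem_closure_iff_nhdsWithin_neBot.mp hxcl
    have t1 : Filter.Tendsto (D j hj r) (𝓝[Set.Ioo (θ j) (θ (j + 1))] x)
        (𝓝 (D j hj r x)) := by
      have := (hDcont j hj r (Nat.le_succ_of_le hr.le)) x (by rwa [huIcc j hj])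
      exact this.mono_left (nhdsWithin_mono x (by rw [huIcc j hj]; exact Set.Ioo_subset_Icc_self))
    have t2 : Filter.Tendsto (iteratedDeriv r Fc) (𝓝[Set.Ioo (θ j) (θ (j + 1))] x)
        (𝓝 (iteratedDeriv r Fc x)) :=
      (hcF.continuousAt).continuousWithinAt
    have t1' : Filter.Tendsto (iteratedDeriv r Fc) (𝓝[Set.Ioo (θ j) (θ (j + 1))] x)
        (𝓝 (D j hj r x)) := by
      refine t1.congr' ?_
      filter_upwards [self_mem_nhdsWithin] with y hy using heqIoo y hy
    exact tendsto_nhds_unique t1' t2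
  -- continuity of the full integrand
  have hcontI : Continuous (fun t : ℝ => ((f t : ℝ) : ℂ) * Complex.exp (c * t)) :=
    (Complex.continuous_ofReal.comp hfcont).mul
      (Complex.continuous_exp.comp (continuous_const.mul Complex.continuous_ofReal))
  -- split the integral over the pieces
  have hsplit : (∫ t in (0 : ℝ)..(2 * π), ((f t : ℝ) : ℂ) * Complex.exp (c * t))
      = ∑ j ∈ Finset.range N, ∫ t in θ j..θ (j + 1), ((f t : ℝ) : ℂ) * Complex.exp (c * t) := by
    rw [intervalIntegral.sum_integral_adjacent_intervals
      (fun j _ => hcontI.intervalIntegrable _ _), hθ0, hθN]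
  -- per-piece integration by parts
  have hpieceid : ∀ j (hj : j < N),
      (∫ t in θ j..θ (j + 1), ((f t : ℝ) : ℂ) * Complex.exp (c * t))
        = (∑ r ∈ Finset.range (m + 1), (-1 : ℂ) ^ r *
            ((D j hj r (θ (j + 1)) * Complex.exp (c * θ (j + 1))
              - D j hj r (θ j) * Complex.exp (c * θ j)) / c ^ (r + 1)))
          + (-1) ^ (m + 1) * (c⁻¹) ^ (m + 1) *
              ∫ t in θ j..θ (j + 1), D j hj (m + 1) t * Complex.exp (c * t) := by
    intro j hj
    have h0 : (∫ t in θ j..θ (j + 1), ((f t : ℝ) : ℂ) * Complex.exp (c * t))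
        = ∫ t in θ j..θ (j + 1), D j hj 0 t * Complex.exp (c * t) := by
      apply intervalIntegral.integral_congr
      intro t ht
      have htIcc : t ∈ Set.Icc (θ j) (θ (j + 1)) := (huIcc j hj) ▸ ht
      have : D j hj 0 t = Gc j hj t := by
        show iteratedDerivWithin 0 (Gc j hj) (U j hj) t = Gc j hj t
        simp
      simp only [this]
      simp [hGc, hfg j hj htIcc]
    rw [h0]
    exact ibp_iter c hcne _ _ (m + 1) (D j hj) (hchain j hj) (hDcont j hj)
  -- telescoping data
  set ψ : ℕ → ℕ → ℂ := fun r i => iteratedDeriv r Fc (θ i) * Complex.exp (c * θ i) with hψ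
  set R : ℕ → ℂ := fun j => if hj : j < N then
      (-1 : ℂ) ^ m * ((D j hj m (θ (j + 1)) * Complex.exp (c * θ (j + 1))
        - D j hj m (θ j) * Complex.exp (c * θ j)) / c ^ (m + 1))
      + (-1) ^ (m + 1) * (c⁻¹) ^ (m + 1) *
          ∫ t in θ j..θ (j + 1), D j hj (m + 1) t * Complex.exp (c * t)
    else 0 with hR
  have hpieceid2 : ∀ j (hj : j < N),
      (∫ t in θ j..θ (j + 1), ((f t : ℝ) : ℂ) * Complex.exp (c * t))
        = (∑ r ∈ Finset.range m, (-1 : ℂ) ^ r * ((ψ r (j + 1) - ψ r j) / c ^ (r + 1))) + R j := by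
    intro j hj
    rw [hpieceid j hj, Finset.sum_range_succ, hR]
    simp only [dif_pos hj]
    rw [add_assoc]
    congr 1
    apply Finset.sum_congr rfl
    intro r hr
    have hrm : r < m := Finset.mem_range.mp hr
    have hl : θ j ∈ Set.Icc (θ j) (θ (j + 1)) := Set.left_mem_Icc.mpr (hθle j hj)
    have hrt : θ (j + 1) ∈ Set.Icc (θ j) (θ (j + 1)) := Set.right_mem_Icc.mpr (hθle j hj)
    rw [hbd j hj r hrm _ hl, hbd j hj r hrm _ hrt]
  -- periodicity kills the telescoping sums
  have hψNzero : ∀ r, ψ r N = ψ r 0 := by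
    intro r
    have h1 : iteratedDeriv r Fc (θ N) = iteratedDeriv r Fc (θ 0) := by
      rw [hθ0, hθN]
      have := periodic_iteratedDeriv hFcper r 0
      simpa using this
    have h2 : Complex.exp (c * θ N) = Complex.exp (c * θ 0) := by
      rw [hθ0, hθN]
      have : c * ((2 * π : ℝ) : ℂ) = ((-k : ℤ) : ℂ) * (2 * π * Complex.I) := by
        push_cast [hc]; ring
      rw [this, Complex.exp_int_mul_two_pi_mul_I]
      simp
    simp [hψ, h1, h2]
  have htotal : (∫ t in (0 : ℝ)..(2 * π), ((f t : ℝ) : ℂ) * Complex.exp (c * t))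
      = ∑ j ∈ Finset.range N, R j := by
    rw [hsplit]
    rw [Finset.sum_congr rfl (fun j hj => hpieceid2 j (Finset.mem_range.mp hj))]
    rw [Finset.sum_add_distrib]
    have hzero : ∑ j ∈ Finset.range N,
        ∑ r ∈ Finset.range m, (-1 : ℂ) ^ r * ((ψ r (j + 1) - ψ r j) / c ^ (r + 1)) = 0 := by
      rw [Finset.sum_comm]
      apply Finset.sum_eq_zero
      intro r _
      rw [← Finset.mul_sum, ← Finset.sum_div, Finset.sum_range_sub (fun i => ψ r i),
        hψNzero r]
      simp
    rw [hzero, zero_add]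
  -- the final bound
  have hkpos : (0 : ℝ) < |(k : ℝ)| ^ (m + 1) := by
    have : (0 : ℝ) < |(k : ℝ)| := abs_pos.mpr (by exact_mod_cast hk)
    positivity
  have hRbound : ∀ j ∈ Finset.range N, ‖R j‖ ≤
      (if hj : j < N then ‖D j hj m (θ j)‖ + ‖D j hj m (θ (j + 1))‖ +
        ∫ t in θ j..θ (j + 1), ‖D j hj (m + 1) t‖ else 0) / |(k : ℝ)| ^ (m + 1) := by
    intro j hjr
    have hj : j < N := Finset.mem_range.mp hjr
    rw [hR]
    simp only [dif_pos hj]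
    have hnormE : ∀ t : ℝ, ‖Complex.exp (c * t)‖ = 1 := fun t => by
      rw [hEabs t]
    have hcpow : ‖c ^ (m + 1)‖ = |(k : ℝ)| ^ (m + 1) := by
      rw [norm_pow, habs_c]
    have hJ : ‖∫ t in θ j..θ (j + 1), D j hj (m + 1) t * Complex.exp (c * t)‖
        ≤ ∫ t in θ j..θ (j + 1), ‖D j hj (m + 1) t‖ := by
      refine (intervalIntegral.norm_integral_le_integral_norm (hθle j hj)).trans_eq ?_
      apply intervalIntegral.integral_congr
      intro t _
      simp [norm_mul, hnormE t]
    have hX : ‖D j hj m (θ (j + 1)) * Complex.exp (c * θ (j + 1))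
        - D j hj m (θ j) * Complex.exp (c * θ j)‖
        ≤ ‖D j hj m (θ j)‖ + ‖D j hj m (θ (j + 1))‖ := by
      refine (norm_sub_le _ _).trans ?_
      rw [norm_mul, norm_mul, hnormE, hnormE, mul_one, mul_one]
      linarith [norm_nonneg (D j hj m (θ j)), norm_nonneg (D j hj m (θ (j + 1)))]
    calc ‖(-1 : ℂ) ^ m * ((D j hj m (θ (j + 1)) * Complex.exp (c * θ (j + 1))
          - D j hj m (θ j) * Complex.exp (c * θ j)) / c ^ (m + 1))
        + (-1) ^ (m + 1) * (c⁻¹) ^ (m + 1) *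
            ∫ t in θ j..θ (j + 1), D j hj (m + 1) t * Complex.exp (c * t)‖
        ≤ ‖(-1 : ℂ) ^ m * ((D j hj m (θ (j + 1)) * Complex.exp (c * θ (j + 1))
            - D j hj m (θ j) * Complex.exp (c * θ j)) / c ^ (m + 1))‖
          + ‖(-1 : ℂ) ^ (m + 1) * (c⁻¹) ^ (m + 1) *
            ∫ t in θ j..θ (j + 1), D j hj (m + 1) t * Complex.exp (c * t)‖ :=
          norm_add_le _ _
      _ = ‖D j hj m (θ (j + 1)) * Complex.exp (c * θ (j + 1))
            - D j hj m (θ j) * Complex.exp (c * θ j)‖ / |(k : ℝ)| ^ (m + 1)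
          + ‖∫ t in θ j..θ (j + 1), D j hj (m + 1) t * Complex.exp (c * t)‖
            / |(k : ℝ)| ^ (m + 1) := by
          rw [norm_mul, norm_mul, norm_mul, norm_div, hcpow]
          simp only [norm_pow, norm_neg, norm_one, one_pow, one_mul, norm_inv,
            habs_c]
          rw [inv_pow, inv_mul_eq_div]
      _ ≤ (‖D j hj m (θ j)‖ + ‖D j hj m (θ (j + 1))‖) / |(k : ℝ)| ^ (m + 1)
          + (∫ t in θ j..θ (j + 1), ‖D j hj (m + 1) t‖) / |(k : ℝ)| ^ (m + 1) := by
          gcongr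
      _ = (‖D j hj m (θ j)‖ + ‖D j hj m (θ (j + 1))‖ +
            ∫ t in θ j..θ (j + 1), ‖D j hj (m + 1) t‖) / |(k : ℝ)| ^ (m + 1) := by
          rw [← add_div]
  calc ‖∫ t in (0 : ℝ)..(2 * π), ((f t : ℝ) : ℂ) * Complex.exp (c * t)‖
      = ‖∑ j ∈ Finset.range N, R j‖ := by rw [← htotal]
    _ ≤ ∑ j ∈ Finset.range N, ‖R j‖ := norm_sum_le _ _
    _ ≤ ∑ j ∈ Finset.range N, (if hj : j < N then ‖D j hj m (θ j)‖ + ‖D j hj m (θ (j + 1))‖ +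
          ∫ t in θ j..θ (j + 1), ‖D j hj (m + 1) t‖ else 0) / |(k : ℝ)| ^ (m + 1) :=
        Finset.sum_le_sum hRbound
    _ = M / |(k : ℝ)| ^ (m + 1) := by rw [hM, Finset.sum_div]
end

section
/- Let x₁ < x₂ < x₃ < x₄ be real numbers and set η = ((x₂−x₁)·(x₄−x₃)) / ((x₃−x₁)·(x₄−x₂)). Then for every x ∈ ℝ, β_{[x₁,x₃]}(x) + β_{[x₂,x₄]}(x) − η·(β_{[x₁,x₂]}(x) + β_{[x₃,x₄]}(x)) − (1−η)·(β_{[x₂,x₃]}(x) + β_{[x₁,x₄]}(x)) = 0. -/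
/-!
Split the line at `x₂` and `x₃`; between them the identity is a rational identity. Left of `x₂`
only the three coolness functions starting at `x₁` survive, and there
`β_{[p,q]}(x) = 2(x - p) - 2(x - p)² / (q - p)`, so the combination vanishes because `η` is
exactly the weight with `1/(x₃ - x₁) = η/(x₂ - x₁) + (1 - η)/(x₄ - x₁)`. The region right of `x₃`
is the mirror image of the left one under `x ↦ -x`, which preserves the cross-ratio.
-/

/-- Coolness function on the line: `β_{[p,q]}(x) = 2(x-p)(q-x)/(q-p)` on `[p,q]`, `0` outside. -/
noncomputable def betaLine (p q x : ℝ) : ℝ :=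
  if x ∈ Set.Icc p q then 2 * (x - p) * (q - x) / (q - p) else 0

lemma betaLine_of_mem {p q x : ℝ} (hp : p ≤ x) (hq : x ≤ q) :
    betaLine p q x = 2 * (x - p) * (q - x) / (q - p) :=
  if_pos ⟨hp, hq⟩

lemma betaLine_eq_zero_of_le {p q x : ℝ} (h : x ≤ p) : betaLine p q x = 0 := by
  unfold betaLine
  split_ifs with hx
  · simp [le_antisymm h hx.1]
  · rfl

lemma betaLine_eq_zero_of_ge {p q x : ℝ} (h : q ≤ x) : betaLine p q x = 0 := by
  unfold betaLine
  split_ifs with hx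
  · simp [le_antisymm hx.2 h]
  · rfl

lemma betaLine_neg (p q x : ℝ) : betaLine (-q) (-p) (-x) = betaLine p q x := by
  have hmem : -x ∈ Set.Icc (-q) (-p) ↔ x ∈ Set.Icc p q := by
    simp only [Set.mem_Icc, neg_le_neg_iff, and_comm]
  unfold betaLine
  simp only [hmem]
  split_ifs
  · ring
  · rfl

lemma betaLine_of_lt_of_le {p q x : ℝ} (hp : p < x) (hq : x ≤ q) :
    betaLine p q x = 2 * (x - p) - 2 * (x - p) ^ 2 * (q - p)⁻¹ := by
  rw [betaLine_of_mem hp.le hq]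
  field_simp [(by linarith : q - p ≠ 0)]
  ring

lemma betaLine_eq_combination_of_inv_eq {p a b c t x : ℝ} (ha : x ≤ a) (hb : x ≤ b) (hc : x ≤ c)
    (ht : (a - p)⁻¹ = t * (b - p)⁻¹ + (1 - t) * (c - p)⁻¹) :
    betaLine p a x = t * betaLine p b x + (1 - t) * betaLine p c x := by
  rcases le_or_gt x p with hxp | hpx
  · simp only [betaLine_eq_zero_of_le hxp, mul_zero, add_zero]
  · rw [betaLine_of_lt_of_le hpx ha, betaLine_of_lt_of_le hpx hb, betaLine_of_lt_of_le hpx hc]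
    linear_combination (-2 * (x - p) ^ 2) * ht

noncomputable def fixedPointCombination (x₁ x₂ x₃ x₄ η x : ℝ) : ℝ :=
  betaLine x₁ x₃ x + betaLine x₂ x₄ x
    - η * (betaLine x₁ x₂ x + betaLine x₃ x₄ x)
    - (1 - η) * (betaLine x₂ x₃ x + betaLine x₁ x₄ x)

lemma fixedPointCombination_neg (x₁ x₂ x₃ x₄ η x : ℝ) :
    fixedPointCombination (-x₄) (-x₃) (-x₂) (-x₁) η (-x) =
      fixedPointCombination x₁ x₂ x₃ x₄ η x := by
  simp only [fixedPointCombination, betaLine_neg]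
  ring

section

variable {x₁ x₂ x₃ x₄ η x : ℝ} (h12 : x₁ < x₂) (h23 : x₂ < x₃) (h34 : x₃ < x₄)
  (hη : η = ((x₂ - x₁) * (x₄ - x₃)) / ((x₃ - x₁) * (x₄ - x₂)))
include h12 h23 h34 hη

lemma fixedPointCombination_eq_zero_of_le (hx : x ≤ x₂) :
    fixedPointCombination x₁ x₂ x₃ x₄ η x = 0 := by
  have hweight : (x₃ - x₁)⁻¹ = η * (x₂ - x₁)⁻¹ + (1 - η) * (x₄ - x₁)⁻¹ := by
    subst hη
    field_simp [(by linarith : x₂ - x₁ ≠ 0), (by linarith : x₃ - x₁ ≠ 0),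
      (by linarith : x₄ - x₁ ≠ 0), (by linarith : x₄ - x₂ ≠ 0)]
    ring
  have hβ₁₃ := betaLine_eq_combination_of_inv_eq (x := x) (by linarith) hx (by linarith) hweight
  simp only [fixedPointCombination, betaLine_eq_zero_of_le hx,
    betaLine_eq_zero_of_le (hx.trans h23.le), hβ₁₃]
  ring

lemma fixedPointCombination_eq_zero_of_mem (hx₂ : x₂ ≤ x) (hx₃ : x ≤ x₃) :
    fixedPointCombination x₁ x₂ x₃ x₄ η x = 0 := by
  simp only [fixedPointCombination, betaLine_eq_zero_of_ge hx₂, betaLine_eq_zero_of_le hx₃,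
    betaLine_of_mem (h12.le.trans hx₂) hx₃, betaLine_of_mem hx₂ (hx₃.trans h34.le),
    betaLine_of_mem hx₂ hx₃, betaLine_of_mem (h12.le.trans hx₂) (hx₃.trans h34.le)]
  subst hη
  field_simp [(by linarith : x₂ - x₁ ≠ 0), (by linarith : x₃ - x₁ ≠ 0), (by linarith : x₄ - x₁ ≠ 0),
    (by linarith : x₃ - x₂ ≠ 0), (by linarith : x₄ - x₂ ≠ 0), (by linarith : x₄ - x₃ ≠ 0)]
  ring

end

/-- The vector fixed-point identity for coolness functions on the line. -/
theorem stmt_1 (x₁ x₂ x₃ x₄ : ℝ) (h12 : x₁ < x₂) (h23 : x₂ < x₃) (h34 : x₃ < x₄)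
    (η : ℝ) (hη : η = ((x₂ - x₁) * (x₄ - x₃)) / ((x₃ - x₁) * (x₄ - x₂))) :
    ∀ x : ℝ,
      betaLine x₁ x₃ x + betaLine x₂ x₄ x
        - η * (betaLine x₁ x₂ x + betaLine x₃ x₄ x)
        - (1 - η) * (betaLine x₂ x₃ x + betaLine x₁ x₄ x) = 0 := by
  intro x
  change fixedPointCombination x₁ x₂ x₃ x₄ η x = 0
  rcases le_total x x₂ with hx₂ | hx₂
  · exact fixedPointCombination_eq_zero_of_le h12 h23 h34 hη hx₂
  rcases le_total x x₃ with hx₃ | hx₃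
  · exact fixedPointCombination_eq_zero_of_mem h12 h23 h34 hη hx₂ hx₃
  have hη' : η = ((-x₃ - -x₄) * (-x₁ - -x₂)) / ((-x₂ - -x₄) * (-x₁ - -x₃)) :=
    hη.trans (by ring)
  rw [← fixedPointCombination_neg]
  exact fixedPointCombination_eq_zero_of_le (neg_lt_neg h34) (neg_lt_neg h23) (neg_lt_neg h12)
    hη' (neg_le_neg hx₃)
end

section
/- Let 0 < ℓ < 2π, let c ∈ ℝ, and let m be an integer with |m| ≥ 2. Then ∫_{c−ℓ/2}^{c+ℓ/2} (2·sin((θ−(c−ℓ/2))/2)·sin(((c+ℓ/2)−θ)/2) / sin(ℓ/2))·e^{−i m θ} dθ = e^{−i m c}·(2/(m²−1))·( (cos(ℓ/2)/sin(ℓ/2))·(sin(mℓ/2)/m) − cos(mℓ/2) ). -/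
open Real

private lemma aux_hasDerivAt_cexp (a : ℂ) (θ : ℝ) :
    HasDerivAt (fun t : ℝ => Complex.exp (a * (t : ℂ))) (Complex.exp (a * (θ : ℂ)) * a) θ := by
  have h : HasDerivAt (fun t : ℝ => a * (t : ℂ)) a θ := by
    simpa using (Complex.ofRealCLM.hasDerivAt (x := θ)).const_mul a
  simpa using h.cexp

private lemma aux_cos (z : ℂ) :
    Complex.cos z = (Complex.exp (z * Complex.I) + Complex.exp (-z * Complex.I)) / 2 := rfl

private lemma aux_sin (z : ℂ) :
    Complex.sin z = (Complex.exp (-z * Complex.I) - Complex.exp (z * Complex.I)) * Complex.I / 2 := rfl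

set_option maxHeartbeats 1000000 in
private lemma aux_endpoint (B U V m i s : ℂ) (hi : i ^ 2 = -1)
    (hm0 : m ≠ 0) (h1 : 1 - m ≠ 0) (h2 : 1 + m ≠ 0) (hmsq : m ^ 2 - 1 ≠ 0)
    (hs : s = (B⁻¹ - B) * i / 2) (hsne : s ≠ 0) :
    (B * U⁻¹ * V⁻¹ / (2 * i * (1 - m)) - B⁻¹ * U⁻¹ * V⁻¹ / (2 * i * (1 + m))
        + (B + B⁻¹) / 2 * (U⁻¹ * V⁻¹) / (i * m)) / s
      - (B⁻¹ * U⁻¹ * V / (2 * i * (1 - m)) - B * U⁻¹ * V / (2 * i * (1 + m))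
        + (B + B⁻¹) / 2 * (U⁻¹ * V) / (i * m)) / s
      = U⁻¹ * (2 / (m ^ 2 - 1)) *
          ((B + B⁻¹) / 2 / s * ((V⁻¹ - V) * i / 2 / m) - (V + V⁻¹) / 2) := by
  have hi0 : i ≠ 0 := by intro h; rw [h] at hi; norm_num at hi
  have hi3 : i ^ 3 = -i := by rw [pow_succ, hi]; ring
  have hi4 : i ^ 4 = 1 := by rw [show (4:ℕ) = 2*2 from rfl, pow_mul, hi]; norm_num
  have hd1 : 2 * i * (1 - m) ≠ 0 := mul_ne_zero (mul_ne_zero two_ne_zero hi0) h1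
  have hd2 : 2 * i * (1 + m) ≠ 0 := mul_ne_zero (mul_ne_zero two_ne_zero hi0) h2
  have hd3 : i * m ≠ 0 := mul_ne_zero hi0 hm0
  have key : (B * U⁻¹ * V⁻¹ / (2 * i * (1 - m)) - B⁻¹ * U⁻¹ * V⁻¹ / (2 * i * (1 + m))
        + (B + B⁻¹) / 2 * (U⁻¹ * V⁻¹) / (i * m))
      - (B⁻¹ * U⁻¹ * V / (2 * i * (1 - m)) - B * U⁻¹ * V / (2 * i * (1 + m))
        + (B + B⁻¹) / 2 * (U⁻¹ * V) / (i * m))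
      = U⁻¹ * (2 / (m ^ 2 - 1)) *
          ((B + B⁻¹) / 2 * ((V⁻¹ - V) * i / 2) / m - (V + V⁻¹) / 2 * s) := by
    rw [hs, div_sub_div _ _ hd1 hd2, div_add_div _ _ (mul_ne_zero hd1 hd2) hd3,
      div_sub_div _ _ hd1 hd2, div_add_div _ _ (mul_ne_zero hd1 hd2) hd3,
      div_sub_div_same,
      show (V + V⁻¹) / 2 * ((B⁻¹ - B) * i / 2)
        = (V + V⁻¹) / 2 * ((B⁻¹ - B) * i / 2) * m / m from
        (mul_div_cancel_right₀ _ hm0).symm,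
      show U⁻¹ * (2 / (m ^ 2 - 1)) *
          ((B + B⁻¹) / 2 * ((V⁻¹ - V) * i / 2) / m
            - (V + V⁻¹) / 2 * ((B⁻¹ - B) * i / 2) * m / m)
        = (U⁻¹ * 2 * ((B + B⁻¹) / 2 * ((V⁻¹ - V) * i / 2)
            - (V + V⁻¹) / 2 * ((B⁻¹ - B) * i / 2) * m)) / (m ^ 2 - 1) / m from by ring,
      div_div,
      div_eq_div_iff (mul_ne_zero (mul_ne_zero hd1 hd2) hd3) (mul_ne_zero hmsq hm0)]
    ring_nf
    simp only [hi, hi3, hi4]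
    ring_nf
  rw [div_sub_div_same,
    show (B + B⁻¹) / 2 / s * ((V⁻¹ - V) * i / 2 / m)
      = ((B + B⁻¹) / 2 * ((V⁻¹ - V) * i / 2) / m) / s from by ring,
    show (V + V⁻¹) / 2 = ((V + V⁻¹) / 2 * s) / s from (mul_div_cancel_right₀ _ hsne).symm,
    div_sub_div_same,
    show U⁻¹ * (2 / (m ^ 2 - 1)) *
        (((B + B⁻¹) / 2 * ((V⁻¹ - V) * i / 2) / m - (V + V⁻¹) / 2 * s) / s)
      = (U⁻¹ * (2 / (m ^ 2 - 1)) *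
        ((B + B⁻¹) / 2 * ((V⁻¹ - V) * i / 2) / m - (V + V⁻¹) / 2 * s)) / s from by ring,
    key]

set_option maxHeartbeats 4000000 in
/-- Fourier coefficient of the coolness function of the arc `[c - ℓ/2, c + ℓ/2]` in closed form:
for any integer `m` with `|m| ≥ 2`,
`∫ β^{[c-ℓ/2,c+ℓ/2]}(θ) e^{-imθ} dθ
  = e^{-imc} (2/(m²-1)) ( cot(ℓ/2) sin(mℓ/2)/m - cos(mℓ/2) )`. -/
theorem stmt_6 (ℓ c : ℝ) (hℓ : 0 < ℓ) (hℓ' : ℓ < 2 * π) (m : ℤ) (hm : 2 ≤ |m|) :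
    (∫ θ in (c - ℓ / 2)..(c + ℓ / 2),
      ((2 * Real.sin ((θ - (c - ℓ / 2)) / 2) * Real.sin (((c + ℓ / 2) - θ) / 2) /
        Real.sin (ℓ / 2) : ℝ) : ℂ) * Complex.exp (-Complex.I * (m : ℂ) * (θ : ℂ)))
    = Complex.exp (-Complex.I * (m : ℂ) * (c : ℂ)) * (2 / ((m : ℂ) ^ 2 - 1)) *
        (((Real.cos (ℓ / 2) / Real.sin (ℓ / 2) : ℝ) : ℂ) *
          ((Real.sin ((m : ℝ) * ℓ / 2) / (m : ℝ) : ℝ) : ℂ)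
          - ((Real.cos ((m : ℝ) * ℓ / 2) : ℝ) : ℂ)) := by
  have hsR : Real.sin (ℓ / 2) ≠ 0 := by
    have := Real.sin_pos_of_pos_of_lt_pi (x := ℓ / 2) (by linarith) (by linarith)
    linarith
  have hs : (Real.sin (ℓ / 2) : ℂ) ≠ 0 := Complex.ofReal_ne_zero.mpr hsR
  have hm0 : (m : ℂ) ≠ 0 := by
    have : m ≠ 0 := by rcases abs_cases m with ⟨h1, h2⟩ | ⟨h1, h2⟩ <;> omega
    exact_mod_cast this
  have hm1 : (m : ℂ) - 1 ≠ 0 := by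
    have : m ≠ 1 := by rcases abs_cases m with ⟨h1, h2⟩ | ⟨h1, h2⟩ <;> omega
    intro h; apply this; have : (m : ℂ) = 1 := by linear_combination h
    exact_mod_cast this
  have hm2 : (m : ℂ) + 1 ≠ 0 := by
    have : m ≠ -1 := by rcases abs_cases m with ⟨h1, h2⟩ | ⟨h1, h2⟩ <;> omega
    intro h; apply this; have : (m : ℂ) = -1 := by linear_combination h
    exact_mod_cast this
  have hI : Complex.I ≠ 0 := Complex.I_ne_zero
  set a1 : ℂ := Complex.I * (1 - m) with ha1
  set a2 : ℂ := -(Complex.I * (1 + m)) with ha2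
  set a3 : ℂ := -Complex.I * m with ha3
  set F : ℝ → ℂ := fun θ =>
    (Complex.exp (a1 * θ) * Complex.exp (-(Complex.I * c)) / (2 * Complex.I * (1 - m))
      - Complex.exp (a2 * θ) * Complex.exp (Complex.I * c) / (2 * Complex.I * (1 + m))
      + (Real.cos (ℓ / 2) : ℂ) * Complex.exp (a3 * θ) / (Complex.I * m))
      / (Real.sin (ℓ / 2) : ℂ) with hF
  set f : ℝ → ℂ := fun θ =>
    ((2 * Real.sin ((θ - (c - ℓ / 2)) / 2) * Real.sin (((c + ℓ / 2) - θ) / 2) /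
        Real.sin (ℓ / 2) : ℝ) : ℂ) * Complex.exp (-Complex.I * (m : ℂ) * (θ : ℂ)) with hf
  have hderiv : ∀ θ ∈ Set.uIcc (c - ℓ / 2) (c + ℓ / 2), HasDerivAt F (f θ) θ := by
    intro θ _
    have h1 := aux_hasDerivAt_cexp a1 θ
    have h2 := aux_hasDerivAt_cexp a2 θ
    have h3 := aux_hasDerivAt_cexp a3 θ
    have hD : HasDerivAt F
        ((Complex.exp (a1 * θ) * a1 * Complex.exp (-(Complex.I * c)) / (2 * Complex.I * (1 - m))
          - Complex.exp (a2 * θ) * a2 * Complex.exp (Complex.I * c) / (2 * Complex.I * (1 + m))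
          + (Real.cos (ℓ / 2) : ℂ) * (Complex.exp (a3 * θ) * a3) / (Complex.I * m))
          / (Real.sin (ℓ / 2) : ℂ)) θ := by
      exact ((((h1.mul_const _).div_const _).sub ((h2.mul_const _).div_const _)).add
        (((h3.const_mul _)).div_const _)).div_const _
    convert hD using 1
    -- now prove f θ equals that expression
    have key : (2 * Real.sin ((θ - (c - ℓ / 2)) / 2) * Real.sin (((c + ℓ / 2) - θ) / 2))
        = Real.cos (θ - c) - Real.cos (ℓ / 2) := by
      rw [Real.cos_sub_cos,
        show ((c + ℓ / 2) - θ) / 2 = -((θ - c - ℓ / 2) / 2) by ring, Real.sin_neg,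
        show (θ - (c - ℓ / 2)) / 2 = (θ - c + ℓ / 2) / 2 by ring]
      ring
    simp only [hf, key]
    push_cast
    rw [aux_cos ((θ : ℂ) - c), aux_cos ((ℓ : ℂ) / 2)]
    have E1 : Complex.exp (a1 * θ) =
        Complex.exp (Complex.I * θ) * (Complex.exp (Complex.I * m * θ))⁻¹ := by
      rw [← Complex.exp_neg, ← Complex.exp_add]; rw [ha1]; congr 1 <;> ring
    have E2 : Complex.exp (a2 * θ) =
        (Complex.exp (Complex.I * θ))⁻¹ * (Complex.exp (Complex.I * m * θ))⁻¹ := by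
      rw [← Complex.exp_neg, ← Complex.exp_neg, ← Complex.exp_add]; rw [ha2]; congr 1 <;> ring
    have E3 : Complex.exp (a3 * θ) = (Complex.exp (Complex.I * m * θ))⁻¹ := by
      rw [← Complex.exp_neg]; rw [ha3]; congr 1 <;> ring
    have E5 : Complex.exp (((θ : ℂ) - c) * Complex.I) =
        Complex.exp (Complex.I * θ) * (Complex.exp (Complex.I * c))⁻¹ := by
      rw [← Complex.exp_neg, ← Complex.exp_add]; congr 1 <;> ring
    have E6 : Complex.exp (-((θ : ℂ) - c) * Complex.I) =
        (Complex.exp (Complex.I * θ))⁻¹ * Complex.exp (Complex.I * c) := by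
      rw [← Complex.exp_neg, ← Complex.exp_add]; congr 1 <;> ring
    have E7 : Complex.exp (-(Complex.I * c)) = (Complex.exp (Complex.I * c))⁻¹ := by
      rw [← Complex.exp_neg]
    have E4 : Complex.exp (a3 * θ) = (Complex.exp (Complex.I * m * θ))⁻¹ := E3
    rw [E1, E2, E3, E5, E6, E7, ha1, ha2, ha3]
    have hsc : Complex.sin ((ℓ : ℂ) / 2) ≠ 0 := by
      rw [show ((ℓ : ℂ) / 2) = ((ℓ / 2 : ℝ) : ℂ) by push_cast; ring, ← Complex.ofReal_sin]
      exact hs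
    have hx : Complex.exp (Complex.I * θ) ≠ 0 := Complex.exp_ne_zero _
    have hw : Complex.exp (Complex.I * m * θ) ≠ 0 := Complex.exp_ne_zero _
    have hA : Complex.exp (Complex.I * c) ≠ 0 := Complex.exp_ne_zero _
    have h1m : (1 : ℂ) - m ≠ 0 := by intro h; apply hm1; linear_combination -h
    have h1m' : (1 : ℂ) + m ≠ 0 := by intro h; apply hm2; linear_combination h
    have e1 : ∀ X : ℂ, X * (Complex.I * (1 - (m : ℂ))) * (Complex.exp (Complex.I * (c : ℂ)))⁻¹
          / (2 * Complex.I * (1 - (m : ℂ)))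
        = X * (Complex.exp (Complex.I * (c : ℂ)))⁻¹ / 2 := by
      intro X; field_simp
    have e2 : ∀ X : ℂ, X * -(Complex.I * (1 + (m : ℂ))) * Complex.exp (Complex.I * (c : ℂ))
          / (2 * Complex.I * (1 + (m : ℂ)))
        = -(X * Complex.exp (Complex.I * (c : ℂ)) / 2) := by
      intro X; field_simp
    have e3 : ∀ X : ℂ, X * ((Complex.exp (Complex.I * (m : ℂ) * (θ : ℂ)))⁻¹ * (-Complex.I * (m : ℂ)))
          / (Complex.I * (m : ℂ))
        = -(X * (Complex.exp (Complex.I * (m : ℂ) * (θ : ℂ)))⁻¹) := by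
      intro X; field_simp
    rw [e1, e2, e3]
    ring
  have hint : IntervalIntegrable f MeasureTheory.volume (c - ℓ / 2) (c + ℓ / 2) := by
    apply Continuous.intervalIntegrable
    simp only [hf]
    fun_prop
  have := intervalIntegral.integral_eq_sub_of_hasDerivAt hderiv hint
  rw [this]
  -- endpoint evaluation
  simp only [hF]
  push_cast
  rw [aux_cos ((ℓ : ℂ) / 2), aux_cos ((m : ℂ) * ℓ / 2), aux_sin ((m : ℂ) * ℓ / 2)]
  set B := Complex.exp (Complex.I * (ℓ / 2)) with hB'
  set U := Complex.exp (Complex.I * m * c) with hU'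
  set V := Complex.exp (Complex.I * m * (ℓ / 2)) with hV'
  have hB : B ≠ 0 := Complex.exp_ne_zero _
  have hU : U ≠ 0 := Complex.exp_ne_zero _
  have hV : V ≠ 0 := Complex.exp_ne_zero _
  have r1 : Complex.exp (a1 * ((c : ℂ) + (ℓ : ℂ) / 2)) * Complex.exp (-(Complex.I * (c : ℂ)))
      = B * U⁻¹ * V⁻¹ := by
    rw [hB', hU', hV', ha1, ← Complex.exp_neg, ← Complex.exp_neg, ← Complex.exp_add,
      ← Complex.exp_add, ← Complex.exp_add]
    congr 1 <;> ring
  have r2 : Complex.exp (a1 * ((c : ℂ) - (ℓ : ℂ) / 2)) * Complex.exp (-(Complex.I * (c : ℂ)))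
      = B⁻¹ * U⁻¹ * V := by
    rw [hB', hU', hV', ha1, ← Complex.exp_neg, ← Complex.exp_neg, ← Complex.exp_add,
      ← Complex.exp_add, ← Complex.exp_add]
    congr 1 <;> ring
  have r3 : Complex.exp (a2 * ((c : ℂ) + (ℓ : ℂ) / 2)) * Complex.exp (Complex.I * (c : ℂ))
      = B⁻¹ * U⁻¹ * V⁻¹ := by
    rw [hB', hU', hV', ha2, ← Complex.exp_neg, ← Complex.exp_neg, ← Complex.exp_neg,
      ← Complex.exp_add, ← Complex.exp_add, ← Complex.exp_add]
    congr 1 <;> ring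
  have r4 : Complex.exp (a2 * ((c : ℂ) - (ℓ : ℂ) / 2)) * Complex.exp (Complex.I * (c : ℂ))
      = B * U⁻¹ * V := by
    rw [hB', hU', hV', ha2, ← Complex.exp_neg, ← Complex.exp_add, ← Complex.exp_add,
      ← Complex.exp_add]
    congr 1 <;> ring
  have r5 : Complex.exp (a3 * ((c : ℂ) + (ℓ : ℂ) / 2)) = U⁻¹ * V⁻¹ := by
    rw [hU', hV', ha3, ← Complex.exp_neg, ← Complex.exp_neg, ← Complex.exp_add]
    congr 1 <;> ring
  have r6 : Complex.exp (a3 * ((c : ℂ) - (ℓ : ℂ) / 2)) = U⁻¹ * V := by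
    rw [show U⁻¹ * V = V * U⁻¹ from by ring, hU', hV', ha3, ← Complex.exp_neg,
      ← Complex.exp_add]
    congr 1 <;> ring
  have r7 : Complex.exp ((ℓ : ℂ) / 2 * Complex.I) = B := by
    rw [hB']; congr 1 <;> ring
  have r8 : Complex.exp (-((ℓ : ℂ) / 2) * Complex.I) = B⁻¹ := by
    rw [hB', ← Complex.exp_neg]; congr 1 <;> ring
  have r9 : Complex.exp ((m : ℂ) * ℓ / 2 * Complex.I) = V := by
    rw [hV']; congr 1 <;> ring
  have r10 : Complex.exp (-((m : ℂ) * ℓ / 2) * Complex.I) = V⁻¹ := by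
    rw [hV', ← Complex.exp_neg]; congr 1 <;> ring
  have r11 : Complex.exp (a3 * (c : ℂ)) = U⁻¹ := by
    rw [hU', ← Complex.exp_neg, ha3]; congr 1 <;> ring
  set S := Complex.sin ((ℓ : ℂ) / 2) with hS'
  have hSin : S = (B⁻¹ - B) * Complex.I / 2 := by
    rw [hS', aux_sin ((ℓ : ℂ) / 2), r7, r8]
  have hS : S ≠ 0 := by
    rw [hS', show ((ℓ : ℂ) / 2) = ((ℓ / 2 : ℝ) : ℂ) from by push_cast; ring,
      ← Complex.ofReal_sin]
    exact hs
  have h1m : (1 : ℂ) - m ≠ 0 := by intro h; apply hm1; linear_combination -h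
  have h1m' : (1 : ℂ) + m ≠ 0 := by intro h; apply hm2; linear_combination h
  have hmsq : (m : ℂ) ^ 2 - 1 ≠ 0 := by
    intro h; apply hm1
    rcases mul_eq_zero.mp (show ((m:ℂ) - 1) * ((m:ℂ) + 1) = 0 from by linear_combination h)
      with h' | h'
    · exact h'
    · exact absurd h' hm2
  have hI2 : Complex.I ^ 2 = -1 := Complex.I_sq
  rw [r1, r2, r3, r4, r5, r6, r7, r8, r9, r10, r11]
  linear_combination aux_endpoint B U V (m : ℂ) Complex.I S hI2 hm0 h1m h1m' hmsq hSin hS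
end

section
/- For every integer n ≥ 2, the series Σ_{m∈ℤ} λ_{n,m}²·(m⁴−m²) converges absolutely and Σ_{m∈ℤ} λ_{n,m}²·(m⁴−m²) = (π/4)·n·(n²−1)²·tan(π/(2n)). -/
open Real

lemma exp_int_pi (m : ℤ) : Complex.exp ((m : ℂ) * (π * Complex.I)) = (-1) ^ m := by
  rw [Complex.exp_int_mul, Complex.exp_pi_mul_I]

lemma neg_one_zpow_sq (m : ℤ) : ((-1 : ℂ) ^ m) * ((-1 : ℂ) ^ m) = 1 := by
  rw [← zpow_add₀ (by norm_num : (-1:ℂ) ≠ 0), ← two_mul, zpow_mul]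
  norm_num

lemma two_I_sin (z : ℂ) : Complex.exp (z * Complex.I) - Complex.exp (-(z * Complex.I))
    = 2 * Complex.I * Complex.sin z := by
  rw [Complex.sin]
  field_simp
  linear_combination (Complex.exp (z*Complex.I) - Complex.exp (-(z*Complex.I))) * Complex.I_sq

lemma neg_one_zpow_neg (m : ℤ) : (-1 : ℂ) ^ (-m) = (-1) ^ m := by
  rw [zpow_neg]
  exact inv_eq_of_mul_eq_one_left (neg_one_zpow_sq m)

lemma cast_ne_int (a : ℝ) (h0 : 0 < a) (h1 : a < 1) (m : ℤ) : (a : ℝ) ≠ (m : ℝ) := by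
  rcases le_or_gt m 0 with h | h
  · have : (m : ℝ) ≤ 0 := by exact_mod_cast h
    linarith
  · have : (1 : ℝ) ≤ (m : ℝ) := by exact_mod_cast h
    linarith

lemma sub_int_ne (a : ℝ) (h0 : 0 < a) (h1 : a < 1) (m : ℤ) : ((a : ℂ) - (m : ℂ)) ≠ 0 := by
  rw [sub_ne_zero]
  intro h
  exact cast_ne_int a h0 h1 m (by exact_mod_cast h)

lemma add_int_ne (a : ℝ) (h0 : 0 < a) (h1 : a < 1) (m : ℤ) : ((a : ℂ) + (m : ℂ)) ≠ 0 := by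
  have := sub_int_ne a h0 h1 (-m)
  rw [sub_eq_add_neg] at this
  simpa using this

lemma key_integral (a : ℝ) (h0 : 0 < a) (h1 : a < 1) (m : ℤ) :
    ∫ x in (-π:ℝ)..π, Complex.exp (-(m:ℂ) * x * Complex.I) * Complex.cos ((a:ℂ) * x)
      = (-1:ℂ) ^ m * (2 * (a:ℂ) * Complex.sin ((a:ℂ) * π) / ((a:ℂ)^2 - (m:ℂ)^2)) := by
  have ham := sub_int_ne a h0 h1 m
  have hap := add_int_ne a h0 h1 m
  have hc₁ : ((a:ℂ) - m) * Complex.I ≠ 0 := mul_ne_zero ham Complex.I_ne_zero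
  have hc₂ : -((a:ℂ) + m) * Complex.I ≠ 0 := mul_ne_zero (neg_ne_zero.mpr hap) Complex.I_ne_zero
  have hint : ∀ x : ℝ, Complex.exp (-(m:ℂ) * x * Complex.I) * Complex.cos ((a:ℂ) * x)
      = (Complex.exp ((((a:ℂ) - m) * Complex.I) * x) + Complex.exp ((-((a:ℂ) + m) * Complex.I) * x)) / 2 := by
    intro x
    rw [show (((a:ℂ) - m) * Complex.I) * x = -(m:ℂ) * x * Complex.I + (a:ℂ) * x * Complex.I by ring,
        show (-((a:ℂ) + m) * Complex.I) * x = -(m:ℂ) * x * Complex.I + -((a:ℂ) * x) * Complex.I by ring,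
        Complex.exp_add, Complex.exp_add, Complex.cos]
    ring
  rw [intervalIntegral.integral_congr (g := fun x : ℝ =>
      (Complex.exp ((((a:ℂ) - m) * Complex.I) * x) + Complex.exp ((-((a:ℂ) + m) * Complex.I) * x)) / 2)
      (fun x _ => hint x)]
  have hi1 : IntervalIntegrable (fun x : ℝ => Complex.exp ((((a:ℂ) - m) * Complex.I) * x))
      MeasureTheory.volume (-π) π :=
    (Complex.continuous_exp.comp (continuous_const.mul Complex.continuous_ofReal)).intervalIntegrable _ _
  have hi2 : IntervalIntegrable (fun x : ℝ => Complex.exp ((-((a:ℂ) + m) * Complex.I) * x))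
      MeasureTheory.volume (-π) π :=
    (Complex.continuous_exp.comp (continuous_const.mul Complex.continuous_ofReal)).intervalIntegrable _ _
  rw [intervalIntegral.integral_div, intervalIntegral.integral_add hi1 hi2,
      integral_exp_mul_complex hc₁, integral_exp_mul_complex hc₂]
  have e1 : Complex.exp ((((a:ℂ) - m) * Complex.I) * (π:ℝ)) - Complex.exp ((((a:ℂ) - m) * Complex.I) * ((-π:ℝ):ℝ))
      = (-1:ℂ)^m * (2 * Complex.I * Complex.sin ((a:ℂ) * π)) := by
    have h1 : ((((a:ℂ) - m) * Complex.I) * ((π:ℝ):ℂ)) = (a:ℂ) * π * Complex.I + (-m : ℤ) * (π * Complex.I) := by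
      push_cast; ring
    have h2 : ((((a:ℂ) - m) * Complex.I) * (((-π:ℝ)):ℂ)) = -((a:ℂ) * π * Complex.I) + (m : ℤ) * (π * Complex.I) := by
      push_cast; ring
    rw [h1, h2, Complex.exp_add, Complex.exp_add, exp_int_pi, exp_int_pi, neg_one_zpow_neg,
       ← sub_mul, two_I_sin]
    ring
  have e2 : Complex.exp ((-((a:ℂ) + m) * Complex.I) * (π:ℝ)) - Complex.exp ((-((a:ℂ) + m) * Complex.I) * ((-π:ℝ):ℝ))
      = -((-1:ℂ)^m * (2 * Complex.I * Complex.sin ((a:ℂ) * π))) := by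
    have h1 : ((-((a:ℂ) + m) * Complex.I) * ((π:ℝ):ℂ)) = -((a:ℂ) * π * Complex.I) + (-m : ℤ) * (π * Complex.I) := by
      push_cast; ring
    have h2 : ((-((a:ℂ) + m) * Complex.I) * (((-π:ℝ)):ℂ)) = (a:ℂ) * π * Complex.I + (m : ℤ) * (π * Complex.I) := by
      push_cast; ring
    rw [h1, h2, Complex.exp_add, Complex.exp_add, exp_int_pi, exp_int_pi, neg_one_zpow_neg,
       ← sub_mul,
       show Complex.exp (-((a:ℂ) * π * Complex.I)) - Complex.exp ((a:ℂ) * π * Complex.I)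
         = -(Complex.exp ((a:ℂ) * π * Complex.I) - Complex.exp (-((a:ℂ) * π * Complex.I))) from by ring,
       two_I_sin]
    ring
  rw [e1, e2]
  have hsq : ((a:ℂ)^2 - (m:ℂ)^2) ≠ 0 := by
    rw [sq_sub_sq]; exact mul_ne_zero hap ham
  have h₁ : (-1:ℂ)^m * (2 * Complex.I * Complex.sin ((a:ℂ) * π)) / (((a:ℂ) - m) * Complex.I)
      = (-1:ℂ)^m * 2 * Complex.sin ((a:ℂ) * π) / ((a:ℂ) - m) := by
    rw [show (-1:ℂ)^m * (2 * Complex.I * Complex.sin ((a:ℂ) * π))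
        = ((-1:ℂ)^m * 2 * Complex.sin ((a:ℂ) * π)) * Complex.I by ring]
    exact mul_div_mul_right _ _ Complex.I_ne_zero
  have h₂ : -((-1:ℂ)^m * (2 * Complex.I * Complex.sin ((a:ℂ) * π))) / (-((a:ℂ) + m) * Complex.I)
      = (-1:ℂ)^m * 2 * Complex.sin ((a:ℂ) * π) / ((a:ℂ) + m) := by
    rw [show -((-1:ℂ)^m * (2 * Complex.I * Complex.sin ((a:ℂ) * π)))
        = ((-1:ℂ)^m * 2 * Complex.sin ((a:ℂ) * π)) * -Complex.I by ring,
       show -((a:ℂ) + m) * Complex.I = ((a:ℂ) + m) * -Complex.I by ring]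
    exact mul_div_mul_right _ _ (by simpa using Complex.I_ne_zero)
  rw [h₁, h₂]
  field_simp [hsq]
  ring

lemma hasSum_cot (a : ℝ) (h0 : 0 < a) (h1 : a < 1) :
    HasSum (fun m : ℤ => 1 / (a ^ 2 - (m : ℝ) ^ 2))
      (π * Real.cos (a * π) / (a * Real.sin (a * π))) := by
  haveI : Fact (0 < 2 * π) := ⟨by positivity⟩
  have hsin : 0 < Real.sin (a * π) :=
    Real.sin_pos_of_pos_of_lt_pi (by positivity) (by nlinarith [pi_pos])
  set C : ℝ := a * Real.sin (a * π) / π with hC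
  have hCpos : 0 < C := by positivity
  set f : ℝ → ℂ := fun x => Complex.cos ((a : ℂ) * x) with hf
  have hend : f (-π) = f (-π + 2 * π) := by
    rw [show (-π) + 2 * π = π by ring]
    show Complex.cos ((a:ℂ) * ((-π : ℝ) : ℂ)) = Complex.cos ((a:ℂ) * ((π:ℝ):ℂ))
    rw [show ((a:ℂ) * ((-π : ℝ) : ℂ)) = -((a:ℂ) * ((π:ℝ):ℂ)) by push_cast; ring, Complex.cos_neg]
  have hcont : ContinuousOn f (Set.Icc (-π) (-π + 2 * π)) :=
    (Complex.continuous_cos.comp (continuous_const.mul Complex.continuous_ofReal)).continuousOn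
  set F : C(AddCircle (2 * π), ℂ) :=
    ⟨AddCircle.liftIco (2 * π) (-π) f, AddCircle.liftIco_continuous hend hcont⟩ with hF
  have hpi_circ : ((π : ℝ) : AddCircle (2 * π)) = ((-π : ℝ) : AddCircle (2 * π)) := by
    have h := AddCircle.coe_add_period (2 * π) (-π)
    rw [show (-π + 2 * π : ℝ) = π by ring] at h
    exact h
  have hFx : ∀ x : ℝ, x ∈ Set.Icc (-π) π → F ((x : ℝ) : AddCircle (2 * π)) = f x := by
    intro x hx
    rcases lt_or_eq_of_le hx.2 with h | h
    · have := AddCircle.liftIco_coe_apply (p := 2*π) (a := -π) (f := f) (x := x)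
        ⟨hx.1, by linarith⟩
      simpa [hF] using this
    · subst h
      rw [hpi_circ]
      have h2 := AddCircle.liftIco_coe_apply (p := 2*π) (a := -π) (f := f) (x := -π)
        ⟨le_refl _, by nlinarith [pi_pos]⟩
      have h3 : F (((-π : ℝ)) : AddCircle (2 * π)) = f (-π) := by simpa [hF] using h2
      rw [h3, hend, show (-π) + 2 * π = π by ring]
  have hcoeff : ∀ m : ℤ, fourierCoeff (F : AddCircle (2*π) → ℂ) m
      = (-1:ℂ) ^ m * ((C * (1 / (a ^ 2 - (m:ℝ) ^ 2)) : ℝ) : ℂ) := by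
    intro m
    rw [fourierCoeff_eq_intervalIntegral (F : AddCircle (2*π) → ℂ) m (-π),
        show (-π) + 2 * π = π by ring]
    have heq : Set.EqOn (fun x : ℝ => fourier (-m) ((x : ℝ) : AddCircle (2*π)) • F ((x:ℝ) : AddCircle (2*π)))
        (fun x : ℝ => Complex.exp (-(m:ℂ) * x * Complex.I) * Complex.cos ((a:ℂ) * x))
        (Set.uIcc (-π) π) := by
      intro x hx
      rw [Set.uIcc_of_le (by linarith [pi_pos])] at hx
      show fourier (-m) ((x : ℝ) : AddCircle (2*π)) • F ((x:ℝ) : AddCircle (2*π))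
        = Complex.exp (-(m:ℂ) * x * Complex.I) * Complex.cos ((a:ℂ) * x)
      rw [hFx x hx, fourier_coe_apply, smul_eq_mul]
      congr 1
      rw [show 2 * (π:ℂ) * Complex.I * ((-m : ℤ) : ℂ) * (x:ℝ) / ((2 * π : ℝ) : ℂ)
          = -(m:ℂ) * x * Complex.I * ((2 * (π:ℂ)) / ((2 * π : ℝ):ℂ)) by push_cast; ring]
      rw [show ((2 * π : ℝ) : ℂ) = 2 * (π:ℂ) by push_cast; ring]
      rw [div_self (by simp [Complex.ofReal_ne_zero, pi_ne_zero] : 2 * (π:ℂ) ≠ 0), mul_one]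
    rw [intervalIntegral.integral_congr heq, key_integral a h0 h1 m]
    have hsq : ((a:ℂ)^2 - (m:ℂ)^2) ≠ 0 := by
      rw [sq_sub_sq]; exact mul_ne_zero (add_int_ne a h0 h1 m) (sub_int_ne a h0 h1 m)
    rw [Complex.real_smul,
       show Complex.sin ((a:ℂ) * (π:ℝ)) = ((Real.sin (a * π) : ℝ) : ℂ) by
         rw [Complex.ofReal_sin]; push_cast; ring_nf, hC]
    push_cast
    field_simp
  have hd : Summable (fun m : ℤ => 1 / (a ^ 2 - (m:ℝ) ^ 2)) := by
    have h2 : Summable (fun m : ℤ => (1 / (1 - a^2)) * (1 / (m:ℝ)^2)) :=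
      (summable_one_div_int_pow.mpr one_lt_two).mul_left _
    apply h2.of_norm_bounded_eventually
    rw [Filter.eventually_cofinite]
    apply Set.Finite.subset (Set.finite_singleton (0 : ℤ))
    intro m hm
    simp only [Set.mem_setOf_eq, not_le] at hm
    simp only [Set.mem_singleton_iff]
    by_contra hm0
    have h1m : (1:ℝ) ≤ (m:ℝ)^2 := by
      have h1z : (1:ℤ) ≤ m^2 := by
        have h2z := Int.one_le_abs hm0
        nlinarith [sq_abs m, h2z]
      exact_mod_cast h1z
    have ha2 : a^2 < 1 := by nlinarith
    apply absurd hm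
    push_neg
    have hlt : a^2 - (m:ℝ)^2 < 0 := by linarith
    have key : (m:ℝ)^2 * (1 - a^2) ≤ (m:ℝ)^2 - a^2 := by nlinarith [sq_nonneg a]
    have hpos : (0:ℝ) < (m:ℝ)^2 * (1 - a^2) := mul_pos (by linarith) (by linarith)
    rw [Real.norm_eq_abs, abs_of_neg (one_div_neg.mpr hlt),
       show -(1 / (a^2 - (m:ℝ)^2)) = 1 / ((m:ℝ)^2 - a^2) by
         rw [← neg_sub (a^2) ((m:ℝ)^2), one_div_neg_eq_neg_one_div]]
    calc 1 / ((m:ℝ)^2 - a^2) ≤ 1 / ((m:ℝ)^2 * (1 - a^2)) :=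
          one_div_le_one_div_of_le hpos key
      _ = 1 / (1 - a^2) * (1 / (m:ℝ)^2) := by
          rw [one_div_mul_eq_div]
          field_simp
  have hsum : Summable (fourierCoeff (F : AddCircle (2*π) → ℂ)) := by
    apply Summable.congr _ (fun m => (hcoeff m).symm)
    apply Summable.of_norm
    have habs : Summable (fun m : ℤ => |C * (1 / (a ^ 2 - (m:ℝ) ^ 2))|) := (hd.mul_left C).abs
    apply habs.congr
    intro m
    rw [norm_mul, norm_zpow, norm_neg, norm_one, one_zpow, one_mul, Complex.norm_real,
       Real.norm_eq_abs]
  have hps := has_pointwise_sum_fourier_series_of_summable hsum (((π:ℝ)) : AddCircle (2*π))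
  have hFpi : F (((π:ℝ)) : AddCircle (2*π)) = ((Real.cos (a * π) : ℝ) : ℂ) := by
    rw [hFx π ⟨by linarith [pi_pos], le_refl _⟩]
    show Complex.cos ((a:ℂ) * ((π:ℝ):ℂ)) = _
    rw [Complex.ofReal_cos]
    push_cast
    ring_nf
  have hfour : ∀ m : ℤ, fourier m (((π:ℝ)) : AddCircle (2*π)) = (-1:ℂ)^m := by
    intro m
    rw [fourier_coe_apply]
    rw [show 2 * (π:ℂ) * Complex.I * (m : ℂ) * ((π:ℝ):ℂ) / ((2 * π : ℝ) : ℂ)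
        = (m:ℂ) * ((π:ℝ):ℂ) * Complex.I * ((2 * (π:ℂ)) / ((2 * π : ℝ):ℂ)) by push_cast; ring]
    rw [show ((2 * π : ℝ) : ℂ) = 2 * (π:ℂ) by push_cast; ring]
    rw [div_self (by simp [Complex.ofReal_ne_zero, pi_ne_zero] : 2 * (π:ℂ) ≠ 0), mul_one]
    rw [show (m:ℂ) * ((π:ℝ):ℂ) * Complex.I = (m:ℂ) * ((π:ℂ) * Complex.I) by push_cast; ring]
    exact exp_int_pi m
  rw [hFpi] at hps
  have hfun : (fun m : ℤ => fourierCoeff (F : AddCircle (2*π) → ℂ) m • fourier m (((π:ℝ)) : AddCircle (2*π)))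
      = fun m : ℤ => ((C * (1 / (a ^ 2 - (m:ℝ) ^ 2)) : ℝ) : ℂ) := by
    funext m
    rw [hcoeff m, hfour m, smul_eq_mul,
       mul_comm ((-1:ℂ)^m) _, mul_assoc, neg_one_zpow_sq, mul_one]
  rw [hfun] at hps
  have hreal : HasSum (fun m : ℤ => C * (1 / (a ^ 2 - (m:ℝ) ^ 2))) (Real.cos (a * π)) :=
    Complex.hasSum_ofReal.mp hps
  have hdiv := hreal.div_const C
  have hCne : C ≠ 0 := ne_of_gt hCpos
  have hterm : (fun m : ℤ => C * (1 / (a ^ 2 - (m:ℝ) ^ 2)) / C)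
      = fun m : ℤ => 1 / (a ^ 2 - (m:ℝ) ^ 2) := by
    funext m
    rw [mul_comm, mul_div_assoc, div_self hCne, mul_one]
  rw [hterm] at hdiv
  have hval : Real.cos (a * π) / C = π * Real.cos (a * π) / (a * Real.sin (a * π)) := by
    rw [hC, div_div_eq_mul_div, mul_comm (Real.cos (a * π)) π]
  rwa [hval] at hdiv

lemma hasSum_odd (a : ℝ) (h0 : 0 < a) (h2 : a ≤ 1/2) :
    HasSum (fun m : ℤ => 1 / (((2*m+1 : ℤ) : ℝ) ^ 2 - a ^ 2))
      (π / (2*a) * Real.tan (a * π / 2)) := by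
  have h1 : a < 1 := by linarith
  have hA := hasSum_cot a h0 h1
  have hA2 := (hasSum_cot (a/2) (by linarith) (by linarith)).mul_left (1/4 : ℝ)
  have hA2' : HasSum (fun m : ℤ => 1 / (a ^ 2 - ((2*m : ℤ) : ℝ) ^ 2))
      ((1/4) * (π * Real.cos (a/2 * π) / (a/2 * Real.sin (a/2 * π)))) := by
    apply hA2.congr_fun
    intro m
    push_cast
    rw [div_mul_div_comm, one_mul]
    congr 1
    ring
  set g_ev : ℤ → ℝ := fun m => if Even m then 1 / (a ^ 2 - (m:ℝ) ^ 2) else 0 with hgev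
  have hev : HasSum g_ev ((1/4) * (π * Real.cos (a/2 * π) / (a/2 * Real.sin (a/2 * π)))) := by
    rw [← Function.Injective.hasSum_iff (g := fun m : ℤ => 2*m)
        (fun x y h => by simp only at h; omega)
        (fun m hm => by
          rw [hgev]
          apply if_neg
          intro hcon
          exact hm (by obtain ⟨r, hr⟩ := hcon; exact ⟨r, by simp only; omega⟩))]
    apply hA2'.congr_fun
    intro m
    show g_ev (2*m) = _
    rw [hgev]
    simp only [if_pos (even_two_mul m)]
  have hodd1 : HasSum (fun m : ℤ => if Even m then 0 else 1 / ((m:ℝ) ^ 2 - a ^ 2))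
      ((1/4) * (π * Real.cos (a/2 * π) / (a/2 * Real.sin (a/2 * π)))
        - π * Real.cos (a * π) / (a * Real.sin (a * π))) := by
    apply (hev.sub hA).congr_fun
    intro m
    by_cases h : Even m
    · simp [hgev, h]
    · rw [if_neg h, hgev]
      simp only [if_neg h]
      rw [zero_sub, ← neg_sub (a^2) ((m:ℝ)^2), one_div_neg_eq_neg_one_div]
  have hodd2 : HasSum (fun m : ℤ => 1 / (((2*m+1 : ℤ) : ℝ) ^ 2 - a ^ 2))
      ((1/4) * (π * Real.cos (a/2 * π) / (a/2 * Real.sin (a/2 * π)))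
        - π * Real.cos (a * π) / (a * Real.sin (a * π))) := by
    rw [← Function.Injective.hasSum_iff (g := fun m : ℤ => 2*m+1)
        (fun x y h => by simp only at h; omega) (f := fun m : ℤ => if Even m then 0 else 1 / ((m:ℝ) ^ 2 - a ^ 2))
        (fun m hm => by
          apply if_pos
          rcases Int.even_or_odd m with h | h
          · exact h
          · exact absurd (by obtain ⟨r, hr⟩ := h; exact ⟨r, by simp only; omega⟩ : m ∈ Set.range fun m : ℤ => 2*m+1) hm)] at hodd1
    apply hodd1.congr_fun
    intro m
    show _ = (if Even (2*m+1) then (0:ℝ) else 1 / (((2*m+1 : ℤ):ℝ) ^ 2 - a ^ 2))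
    rw [if_neg (by simp [Int.even_add_one, parity_simps])]
  have hval : (1/4) * (π * Real.cos (a/2 * π) / (a/2 * Real.sin (a/2 * π)))
        - π * Real.cos (a * π) / (a * Real.sin (a * π))
      = π / (2*a) * Real.tan (a * π / 2) := by
    have hu0 : 0 < a/2 * π := by positivity
    have hu1 : a/2 * π < π/2 := by nlinarith [pi_pos]
    have hs : 0 < Real.sin (a/2 * π) := Real.sin_pos_of_pos_of_lt_pi hu0 (by linarith [pi_pos])
    have hc : 0 < Real.cos (a/2 * π) := Real.cos_pos_of_mem_Ioo ⟨by linarith, hu1⟩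
    have hpy := Real.sin_sq_add_cos_sq (a/2 * π)
    have halg : ∀ p s c : ℝ, s ≠ 0 → c ≠ 0 → s^2+c^2=1 →
        (1/4)*(p*c/(a/2*s)) - p*(2*c^2-1)/(a*(2*s*c)) = p/(2*a)*(s/c) := by
      intro p s c hs' hc' hpy'
      have ha := h0.ne'
      field_simp
      linear_combination (-4*p) * hpy'
    rw [show a * π = 2 * (a/2 * π) by ring, Real.cos_two_mul, Real.sin_two_mul,
       show 2 * (a/2 * π) / 2 = a/2 * π by ring, Real.tan_eq_sin_div_cos]
    exact halg π _ _ hs.ne' hc.ne' hpy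
  rwa [hval] at hodd2

lemma hasSum_odd_nat (a : ℝ) (h0 : 0 < a) (h2 : a ≤ 1/2) :
    HasSum (fun k : ℕ => 1 / (((2*k+1 : ℕ) : ℝ) ^ 2 - a ^ 2))
      (π / (4*a) * Real.tan (a * π / 2)) := by
  have hZ := hasSum_odd a h0 h2
  have hsumf : Summable (fun k : ℕ => 1 / (((2*k+1 : ℕ) : ℝ) ^ 2 - a ^ 2)) := by
    have hcomp := hZ.summable.comp_injective (i := fun k : ℕ => (k : ℤ))
      (fun x y h => by simp only at h; exact_mod_cast h)
    apply hcomp.congr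
    intro k
    show 1 / (((2*(k:ℤ)+1 : ℤ) : ℝ) ^ 2 - a ^ 2) = _
    push_cast
    ring_nf
  obtain ⟨s, hs⟩ := hsumf
  have hrec : HasSum (fun m : ℤ => 1 / (((2*m+1 : ℤ) : ℝ) ^ 2 - a ^ 2)) (s + s) := by
    apply (hs.int_rec hs).congr_fun
    intro m
    cases m with
    | ofNat k =>
        show 1 / (((2*(k:ℤ)+1 : ℤ) : ℝ) ^ 2 - a ^ 2) = 1 / (((2*k+1 : ℕ) : ℝ) ^ 2 - a ^ 2)
        push_cast
        ring_nf
    | negSucc k =>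
        show 1 / (((2*(Int.negSucc k)+1 : ℤ) : ℝ) ^ 2 - a ^ 2) = 1 / (((2*k+1 : ℕ) : ℝ) ^ 2 - a ^ 2)
        rw [Int.negSucc_eq]
        push_cast
        ring_nf
  have hkey : π / (2*a) * Real.tan (a * π / 2)
      = (π / (4*a) * Real.tan (a * π / 2)) + (π / (4*a) * Real.tan (a * π / 2)) := by
    have := h0.ne'
    field_simp
    ring
  have hss := hrec.unique hZ
  rw [hkey] at hss
  have : s = π / (4*a) * Real.tan (a * π / 2) := by linarith
  rwa [this] at hs

open Classical in
/-- The Fourier coefficients `λ_{n,m}` of the approximate Virasoro generator `L̃ₙ`: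
`λ_{n,m} = (n³-n)/(m³-m)` if `m = (-1)^k (2k+1) n` for some `k ≥ 0`, and `0` otherwise. -/
noncomputable def lamCoef (n : ℕ) (m : ℤ) : ℝ :=
  if ∃ k : ℕ, m = (-1) ^ k * (2 * (k : ℤ) + 1) * (n : ℤ) then
    ((n : ℝ) ^ 3 - (n : ℝ)) / ((m : ℝ) ^ 3 - (m : ℝ))
  else 0

/-- Evaluation of `⟨Ψ|[[L̃ₙ, L₀], L̃₋ₙ]|Ψ⟩` (up to `c/12`): the series
`Σ_{m∈ℤ} λ_{n,m}² (m⁴-m²)` converges absolutely and equals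
`(π/4) n (n²-1)² tan(π/(2n))`. -/
theorem stmt_9 (n : ℕ) (hn : 2 ≤ n) :
    Summable (fun m : ℤ => |lamCoef n m ^ 2 * ((m : ℝ) ^ 4 - (m : ℝ) ^ 2)|) ∧
    ∑' m : ℤ, lamCoef n m ^ 2 * ((m : ℝ) ^ 4 - (m : ℝ) ^ 2)
      = (π / 4) * n * ((n : ℝ) ^ 2 - 1) ^ 2 * Real.tan (π / (2 * n)) := by
  have hN2 : (2:ℝ) ≤ (n:ℝ) := by exact_mod_cast hn
  have hN0 : (0:ℝ) < (n:ℝ) := by linarith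
  -- the embedding
  set e : ℕ → ℤ := fun k => (-1) ^ k * (2 * (k : ℤ) + 1) * (n : ℤ) with he
  have hinj : Function.Injective e := by
    intro x y h
    have h2 := congrArg Int.natAbs h
    simp only [he, Int.natAbs_mul, Int.natAbs_pow] at h2
    norm_num at h2
    omega
  have hoff : ∀ m : ℤ, m ∉ Set.range e →
      lamCoef n m ^ 2 * ((m : ℝ) ^ 4 - (m : ℝ) ^ 2) = 0 := by
    intro m hm
    have hne : ¬ ∃ k : ℕ, m = (-1) ^ k * (2 * (k : ℤ) + 1) * (n : ℤ) :=
      fun ⟨k, hk⟩ => hm ⟨k, hk.symm⟩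
    rw [lamCoef, if_neg hne]
    ring
  -- the basic sum
  have ha0 : 0 < 1/(n:ℝ) := by positivity
  have ha2 : 1/(n:ℝ) ≤ 1/2 := by
    rw [div_le_div_iff₀ hN0 (by norm_num)]; linarith
  have HA := (hasSum_odd_nat (1/(n:ℝ)) ha0 ha2).mul_left (((n:ℝ)^2 - 1)^2)
  -- term identification
  have hterm : ∀ k : ℕ, lamCoef n (e k) ^ 2 * (((e k : ℤ) : ℝ) ^ 4 - ((e k : ℤ) : ℝ) ^ 2)
      = ((n:ℝ)^2 - 1)^2 * (1 / (((2*k+1 : ℕ) : ℝ) ^ 2 - (1/(n:ℝ)) ^ 2)) := by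
    intro k
    have hsq : ((-1:ℤ)^k)^2 = 1 := by
      rw [← pow_mul, mul_comm, pow_mul]; norm_num
    have hM2z : (e k)^2 = ((2*(k:ℤ)+1) * (n:ℤ))^2 := by
      calc (e k)^2 = ((-1:ℤ)^k)^2 * ((2*(k:ℤ)+1) * (n:ℤ))^2 := by rw [he]; ring
        _ = ((2*(k:ℤ)+1) * (n:ℤ))^2 := by rw [hsq, one_mul]
    have hM2 : ((e k : ℤ) : ℝ)^2 = ((2*(k:ℝ)+1) * (n:ℝ))^2 := by
      have := congrArg (fun z : ℤ => (z : ℝ)) hM2z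
      push_cast at this
      push_cast
      linarith
    rw [lamCoef, if_pos ⟨k, rfl⟩]
    have key : ∀ M : ℝ, M^2 = ((2*(k:ℝ)+1) * (n:ℝ))^2 →
        (((n:ℝ)^3 - (n:ℝ))/(M^3 - M))^2 * (M^4 - M^2)
        = ((n:ℝ)^2 - 1)^2 * (1 / ((2*(k:ℝ)+1) ^ 2 - (1/(n:ℝ)) ^ 2)) := by
      intro M hM
      have hk0 : (0:ℝ) ≤ (k:ℝ) := Nat.cast_nonneg k
      have hx1 : (1:ℝ) ≤ 2*(k:ℝ)+1 := by linarith
      have hxN : (2:ℝ) ≤ (2*(k:ℝ)+1) * (n:ℝ) := by nlinarith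
      have hq1 : (1:ℝ) < ((2*(k:ℝ)+1) * (n:ℝ))^2 := by nlinarith
      have hd1 : ((2*(k:ℝ)+1) * (n:ℝ))^2 - 1 ≠ 0 := by nlinarith
      have hQ0 : ((2*(k:ℝ)+1) * (n:ℝ))^2 ≠ 0 := by nlinarith
      rw [div_pow, show (M^3 - M)^2 = M^2 * ((M^2 - 1))^2 by ring,
         show M^4 - M^2 = M^2 * (M^2 - 1) by ring, hM]
      rw [show (2*(k:ℝ)+1)^2 - (1/(n:ℝ))^2 = (((2*(k:ℝ)+1) * (n:ℝ))^2 - 1)/(n:ℝ)^2 by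
            field_simp]
      rw [one_div_div, div_mul_eq_mul_div, ← mul_div_assoc,
         div_eq_div_iff (mul_ne_zero hQ0 (pow_ne_zero 2 hd1)) hd1]
      ring
    have := key (((e k : ℤ) : ℝ)) hM2
    push_cast at this ⊢
    convert this using 3
  have hG : HasSum (fun m : ℤ => lamCoef n m ^ 2 * ((m : ℝ) ^ 4 - (m : ℝ) ^ 2))
      ((π / 4) * n * ((n : ℝ) ^ 2 - 1) ^ 2 * Real.tan (π / (2 * n))) := by
    have hcomp : HasSum ((fun m : ℤ => lamCoef n m ^ 2 * ((m : ℝ) ^ 4 - (m : ℝ) ^ 2)) ∘ e)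
        (((n:ℝ)^2 - 1)^2 * (π / (4 * (1/(n:ℝ))) * Real.tan ((1/(n:ℝ)) * π / 2))) := by
      apply HA.congr_fun
      intro k
      exact hterm k
    have hmain := (hinj.hasSum_iff hoff).mp hcomp
    have hvv : ((n:ℝ)^2-1)^2 * (π/(4*(1/(n:ℝ))) * Real.tan (1/(n:ℝ) * π/2))
        = π/4*(n:ℝ)*((n:ℝ)^2-1)^2*Real.tan (π/(2*(n:ℝ))) := by
      rw [show (1/(n:ℝ)) * π / 2 = π / (2*(n:ℝ)) by
            rw [one_div, inv_mul_eq_div, div_div, mul_comm (n:ℝ) 2],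
          show π/(4*(1/(n:ℝ))) = π*(n:ℝ)/4 by field_simp]
      ring
    rwa [hvv] at hmain
  constructor
  · apply Summable.abs
    exact hG.summable
  · rw [hG.tsum_eq]
end

section
/- For every integer n ≥ 2, Σ_{k=0}^{∞} 1 / ( (2k+1)²·n² − 1 ) = (π/(4n))·tan(π/(2n)). -/
open Real

noncomputable section StmtAux

namespace Stmt11Aux

/-- The basic exponential integral over a period. -/
lemma aux_int (w : ℝ) (hw : w ≠ 0) :
    ∫ x in (-π)..(-π + 2 * π), Complex.exp ((w : ℂ) * Complex.I * x)
      = ((2 * Real.sin (w * π) / w : ℝ) : ℂ) := by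
  have hc : (w : ℂ) * Complex.I ≠ 0 :=
    mul_ne_zero (Complex.ofReal_ne_zero.mpr hw) Complex.I_ne_zero
  rw [show (fun x : ℝ => Complex.exp ((w : ℂ) * Complex.I * x))
      = fun x : ℝ => Complex.exp (((w : ℂ) * Complex.I) * x) from rfl,
    integral_exp_mul_complex hc]
  have h1 : (w : ℂ) * Complex.I * ((-π + 2 * π : ℝ) : ℂ) = ((w * π : ℝ) : ℂ) * Complex.I := by
    push_cast; ring
  have h2 : (w : ℂ) * Complex.I * ((-π : ℝ) : ℂ) = ((-(w * π) : ℝ) : ℂ) * Complex.I := by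
    push_cast; ring
  rw [h1, h2, Complex.exp_mul_I, Complex.exp_mul_I, Complex.ofReal_neg, Complex.cos_neg,
    Complex.sin_neg, ← Complex.ofReal_sin, ← Complex.ofReal_cos]
  have hI := Complex.I_ne_zero
  have hw' : (w : ℂ) ≠ 0 := Complex.ofReal_ne_zero.mpr hw
  push_cast
  field_simp
  ring

set_option maxHeartbeats 1000000 in
/-- The key HasSum statement, obtained from Fourier analysis of `cos (z x)` on `[-π, π]`. -/
lemma hasSum_aux (z : ℝ) (hz0 : 0 < z) (hz : z ≤ 1 / 2) :
    HasSum (fun j : ℕ => 4 * Real.sin (π * z) * z / (π * ((2 * (j : ℝ) + 1) ^ 2 - z ^ 2)))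
      (1 - Real.cos (π * z)) := by
  haveI : Fact (0 < 2 * π) := ⟨by linarith [Real.pi_pos]⟩
  have hπ : (0 : ℝ) < π := Real.pi_pos
  -- the function
  set F : ℝ → ℂ := fun x =>
    (Complex.exp ((z : ℂ) * x * Complex.I) + Complex.exp (-((z : ℂ) * x) * Complex.I)) / 2
    with hFdef
  have hFcos : ∀ x : ℝ, F x = ((Real.cos (z * x) : ℝ) : ℂ) := by
    intro x
    have h1 : (z : ℂ) * x = ((z * x : ℝ) : ℂ) := by push_cast; ring
    rw [hFdef]
    simp only [h1, ← Complex.ofReal_neg, Complex.exp_mul_I, Complex.ofReal_neg,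
      Complex.cos_neg, Complex.sin_neg, ← Complex.ofReal_sin, ← Complex.ofReal_cos]
    ring
  have hFcont : Continuous F := by
    apply Continuous.div_const
    apply Continuous.add
    · exact Complex.continuous_exp.comp (by continuity)
    · exact Complex.continuous_exp.comp (by continuity)
  -- the coefficients
  set R : ℤ → ℝ := fun m =>
    (-1) ^ m * Real.sin (π * z) * z / (π * (z ^ 2 - (m : ℝ) ^ 2)) with hRdef
  have hne1 : ∀ m : ℤ, z - (m : ℝ) ≠ 0 := by
    intro m h
    have h1 : (m : ℝ) = z := by linarith
    have h2 : (0 : ℝ) < (m : ℝ) := by rw [h1]; exact hz0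
    have h3 : ((m : ℝ)) < 1 := by rw [h1]; linarith
    have h2' : (0 : ℤ) < m := by exact_mod_cast h2
    have h3' : m < 1 := by exact_mod_cast h3
    omega
  have hne2 : ∀ m : ℤ, z + (m : ℝ) ≠ 0 := by
    intro m h
    have h1 : (m : ℝ) = -z := by linarith
    have h2 : ((m : ℝ)) < 0 := by rw [h1]; linarith
    have h3 : (-1 : ℝ) < (m : ℝ) := by rw [h1]; linarith
    have h2' : m < 0 := by exact_mod_cast h2
    have h3' : (-1 : ℤ) < m := by exact_mod_cast h3
    omega
  have hsqne : ∀ m : ℤ, z ^ 2 - (m : ℝ) ^ 2 ≠ 0 := by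
    intro m h
    have := hne1 m
    have := hne2 m
    have : (z - m) * (z + m) = 0 := by ring_nf; ring_nf at h; linarith
    rcases mul_eq_zero.mp this with h' | h'
    · exact hne1 m h'
    · exact hne2 m h'
  have hsin1 : ∀ m : ℤ, Real.sin ((z - (m : ℝ)) * π) = (-1) ^ m * Real.sin (π * z) := by
    intro m
    rw [sub_mul, Real.sin_sub, Real.sin_int_mul_pi, mul_zero, sub_zero]
    have : Real.cos ((m : ℝ) * π) = (-1) ^ m := by
      have := Real.cos_int_mul_pi_sub 0 m
      simpa using this
    rw [this, mul_comm z π]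
    ring
  have hsin2 : ∀ m : ℤ, Real.sin ((-z - (m : ℝ)) * π) = -((-1) ^ m * Real.sin (π * z)) := by
    intro m
    have : (-z - (m : ℝ)) * π = -((z - (-m : ℤ)) * π) := by push_cast; ring
    rw [this, Real.sin_neg, hsin1 (-m)]
    have : ((-1 : ℝ)) ^ (-m) = (-1) ^ m := by
      rw [zpow_neg, ← inv_zpow, inv_neg, inv_one]
    rw [this]
  have hab : (-π) < -π + 2 * π := by linarith
  -- coefficient computation
  have hcoeff : ∀ m : ℤ, fourierCoeffOn hab F m = ((R m : ℝ) : ℂ) := by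
    intro m
    rw [fourierCoeffOn_eq_integral]
    have key : Set.EqOn
        (fun x : ℝ => fourier (-m) (x : AddCircle (-π + 2 * π - -π)) • F x)
        (fun x : ℝ => (Complex.exp (((z - (m : ℝ) : ℝ) : ℂ) * Complex.I * x)
          + Complex.exp (((-z - (m : ℝ) : ℝ) : ℂ) * Complex.I * x)) / 2)
        (Set.uIcc (-π) (-π + 2 * π)) := by
      intro x _
      simp only [fourier_coe_apply, smul_eq_mul, hFdef]
      rw [mul_comm, div_mul_eq_mul_div, add_mul, ← Complex.exp_add, ← Complex.exp_add]
      have hπc : ((π : ℝ) : ℂ) ≠ 0 := Complex.ofReal_ne_zero.mpr (ne_of_gt hπ)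
      congr 2
      · congr 1
        push_cast
        field_simp
        ring
      · congr 1
        push_cast
        field_simp
        ring
    rw [intervalIntegral.integral_congr key]
    have hi1 : IntervalIntegrable
        (fun x : ℝ => Complex.exp (((z - (m : ℝ) : ℝ) : ℂ) * Complex.I * x))
        MeasureTheory.volume (-π) (-π + 2 * π) := by
      apply Continuous.intervalIntegrable
      exact Complex.continuous_exp.comp (by continuity)
    have hi2 : IntervalIntegrable
        (fun x : ℝ => Complex.exp (((-z - (m : ℝ) : ℝ) : ℂ) * Complex.I * x))
        MeasureTheory.volume (-π) (-π + 2 * π) := by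
      apply Continuous.intervalIntegrable
      exact Complex.continuous_exp.comp (by continuity)
    rw [show (fun x : ℝ => (Complex.exp (((z - (m : ℝ) : ℝ) : ℂ) * Complex.I * x)
          + Complex.exp (((-z - (m : ℝ) : ℝ) : ℂ) * Complex.I * x)) / 2)
        = fun x : ℝ => ((fun y : ℝ => Complex.exp (((z - (m : ℝ) : ℝ) : ℂ) * Complex.I * y)) x
          + (fun y : ℝ => Complex.exp (((-z - (m : ℝ) : ℝ) : ℂ) * Complex.I * y)) x) / 2
        from rfl]
    rw [intervalIntegral.integral_div, intervalIntegral.integral_add hi1 hi2,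
      aux_int _ (hne1 m), aux_int _ (by
        intro h
        exact hne2 m (by linarith : z + (m : ℝ) = 0))]
    rw [Complex.real_smul]
    norm_cast
    rw [hsin1 m, hsin2 m, hRdef]
    have h1 := hne1 m
    have h2 := hne2 m
    have h3 : -z - (m : ℝ) ≠ 0 := by intro h; exact h2 (by linarith)
    have h4 := hsqne m
    field_simp [h1, h2, h3, h4, Real.pi_ne_zero]
    ring
  -- the periodized function
  have hper : F (-π) = F (-π + 2 * π) := by
    rw [hFcos, hFcos]
    norm_cast
    rw [show z * (-π) = -(z * π) by ring, Real.cos_neg, show z * (-π + 2 * π) = z * π by ring]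
  set G : C(AddCircle (2 * π), ℂ) :=
    ⟨AddCircle.liftIco (2 * π) (-π) F,
      AddCircle.liftIco_continuous (by simpa using hper) hFcont.continuousOn⟩ with hGdef
  have hGcoeff : ∀ m : ℤ, fourierCoeff (⇑G) m = ((R m : ℝ) : ℂ) := by
    intro m
    have : fourierCoeff (AddCircle.liftIco (2 * π) (-π) F) m
        = fourierCoeffOn (lt_add_of_pos_right (-π) (by linarith : (0:ℝ) < 2 * π)) F m :=
      fourierCoeff_liftIco_eq F m
    rw [hGdef]
    simp only [ContinuousMap.coe_mk]
    rw [this]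
    exact hcoeff m
  -- summability of the coefficients
  have hRsum : Summable R := by
    have hg : Summable (fun m : ℤ => 2 * z / π * (1 / (m : ℝ) ^ 2)) :=
      (Real.summable_one_div_int_pow.mpr one_lt_two).mul_left _
    apply Summable.of_norm_bounded_eventually hg
    rw [Filter.eventually_cofinite]
    apply Set.Finite.subset (Set.finite_singleton (0 : ℤ))
    intro m hm
    simp only [Set.mem_setOf_eq] at hm
    simp only [Set.mem_singleton_iff]
    by_contra h0
    apply hm
    have hm1 : (1 : ℝ) ≤ (m : ℝ) ^ 2 := by
      have : (1 : ℤ) ≤ m ^ 2 := by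
        rcases lt_or_gt_of_ne h0 with h | h <;> nlinarith
      exact_mod_cast this
    have hzz : z ^ 2 ≤ 1 / 4 := by nlinarith
    have hden : (m : ℝ) ^ 2 / 2 ≤ (m : ℝ) ^ 2 - z ^ 2 := by nlinarith
    have hdenpos : (0 : ℝ) < (m : ℝ) ^ 2 - z ^ 2 := by nlinarith
    have habs : ‖R m‖ = |Real.sin (π * z)| * z / (π * ((m : ℝ) ^ 2 - z ^ 2)) := by
      rw [Real.norm_eq_abs, hRdef]
      simp only []
      rw [abs_div, abs_mul, abs_mul]
      have h1 : |((-1 : ℝ)) ^ m| = 1 := by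
        rcases Int.even_or_odd m with h | h
        · rw [h.neg_one_zpow]; norm_num
        · rw [Odd.neg_one_zpow h]; norm_num
      have h2 : |π * (z ^ 2 - (m : ℝ) ^ 2)| = π * ((m : ℝ) ^ 2 - z ^ 2) := by
        rw [abs_mul, abs_of_pos hπ, abs_of_neg (by linarith : z ^ 2 - (m : ℝ) ^ 2 < 0)]
        ring
      rw [h1, h2, one_mul, abs_of_pos hz0]
    rw [habs]
    have hsle : |Real.sin (π * z)| ≤ 1 := Real.abs_sin_le_one _
    have hsnn : (0 : ℝ) ≤ |Real.sin (π * z)| := abs_nonneg _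
    rw [div_le_iff₀ (by positivity)]
    have hR : 2 * z / π * (1 / (m : ℝ) ^ 2) * (π * ((m : ℝ) ^ 2 - z ^ 2))
        = 2 * z * ((m : ℝ) ^ 2 - z ^ 2) / (m : ℝ) ^ 2 := by
      field_simp
    rw [hR, le_div_iff₀ (by positivity : (0:ℝ) < (m : ℝ) ^ 2)]
    have hmm : (0:ℝ) ≤ z * (m : ℝ) ^ 2 := by positivity
    nlinarith [mul_le_mul_of_nonneg_left hden (le_of_lt hz0),
      mul_le_mul_of_nonneg_right hsle hmm]
  have hGsummable : Summable (fourierCoeff (⇑G)) :=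
    (Complex.summable_ofReal.mpr hRsum).congr fun m => (hGcoeff m).symm
  -- evaluate at 0
  have hmem0 : (0 : ℝ) ∈ Set.Ico (-π) (-π + (2 * π)) := ⟨by linarith, by linarith⟩
  have hA := has_pointwise_sum_fourier_series_of_summable hGsummable
    (((0 : ℝ) : AddCircle (2 * π)))
  have hG0 : G (((0 : ℝ) : AddCircle (2 * π))) = 1 := by
    rw [hGdef]
    simp only [ContinuousMap.coe_mk]
    rw [AddCircle.liftIco_coe_apply hmem0, hFcos]
    norm_num
  have hA1 : HasSum (fun m : ℤ => ((R m : ℝ) : ℂ)) 1 := by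
    rw [hG0] at hA
    apply hA.congr_fun
    intro m
    rw [hGcoeff m, fourier_coe_apply, smul_eq_mul]
    norm_num
  have hAr : HasSum R 1 := by
    have h := hA1
    rw [show (1 : ℂ) = ((1 : ℝ) : ℂ) by norm_num] at h
    exact Complex.hasSum_ofReal.mp h
  -- evaluate at -π
  have hmemπ : (-π : ℝ) ∈ Set.Ico (-π) (-π + (2 * π)) := ⟨le_refl _, by linarith⟩
  have hB := has_pointwise_sum_fourier_series_of_summable hGsummable
    (((-π : ℝ) : AddCircle (2 * π)))
  have hGπ : G (((-π : ℝ) : AddCircle (2 * π))) = ((Real.cos (π * z) : ℝ) : ℂ) := by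
    rw [hGdef]
    simp only [ContinuousMap.coe_mk]
    rw [AddCircle.liftIco_coe_apply hmemπ, hFcos]
    norm_cast
    rw [show z * (-π) = -(π * z) by ring, Real.cos_neg]
  have hfourierπ : ∀ m : ℤ, fourier m (((-π : ℝ) : AddCircle (2 * π))) = ((-1 : ℂ)) ^ m := by
    intro m
    rw [fourier_coe_apply]
    have harg : 2 * (π : ℂ) * Complex.I * (m : ℂ) * ((-π : ℝ) : ℂ) / ((2 * π : ℝ) : ℂ)
        = ((-m : ℤ) : ℂ) * ((π : ℂ) * Complex.I) := by
      have hπc : ((π : ℝ) : ℂ) ≠ 0 := Complex.ofReal_ne_zero.mpr (ne_of_gt hπ)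
      push_cast
      field_simp
    rw [harg, Complex.exp_int_mul, Complex.exp_pi_mul_I, zpow_neg, ← inv_zpow, inv_neg, inv_one]
  have hB1 : HasSum (fun m : ℤ => ((R m * (-1) ^ m : ℝ) : ℂ)) ((Real.cos (π * z) : ℝ) : ℂ) := by
    rw [hGπ] at hB
    apply hB.congr_fun
    intro m
    rw [hGcoeff m, hfourierπ m, smul_eq_mul]
    push_cast
    ring
  have hBr : HasSum (fun m : ℤ => R m * (-1) ^ m) (Real.cos (π * z)) :=
    (Complex.hasSum_ofReal (f := fun m : ℤ => R m * (-1) ^ m)).mp hB1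
  -- combine
  have hC : HasSum (fun m : ℤ => R m - R m * (-1) ^ m) (1 - Real.cos (π * z)) := hAr.sub hBr
  have hD := hC.nat_add_neg
  have hReven : ∀ m : ℤ, R (-m) = R m := by
    intro m
    rw [hRdef]
    simp only []
    have h1 : ((-1 : ℝ)) ^ (-m) = (-1) ^ m := by
      rw [zpow_neg, ← inv_zpow, inv_neg, inv_one]
    rw [h1]
    push_cast
    ring_nf
  have hE : HasSum (fun k : ℕ => 2 * (R k - R k * (-1) ^ (k : ℤ))) (1 - Real.cos (π * z)) := by
    have h0 : R (0 : ℤ) - R 0 * (-1) ^ (0 : ℤ) = 0 := by simp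
    rw [show (1 : ℝ) - Real.cos (π * z)
        = (1 - Real.cos (π * z)) + (R 0 - R 0 * (-1) ^ (0 : ℤ)) by rw [h0, add_zero]]
    apply hD.congr_fun
    intro k
    rw [hReven (k : ℤ)]
    have : ((-1 : ℝ)) ^ (-(k : ℤ)) = (-1) ^ (k : ℤ) := by
      rw [zpow_neg, ← inv_zpow, inv_neg, inv_one]
    rw [this]
    ring
  set u : ℕ → ℝ := fun k => 2 * (R k - R k * (-1) ^ k) with hudef
  have hE' : HasSum u (1 - Real.cos (π * z)) := by
    apply hE.congr_fun
    intro k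
    rw [hudef]
    simp only []
    rw [zpow_natCast]
  have hinj : Function.Injective (fun j : ℕ => 2 * j + 1) := by
    intro a b h
    simp only [] at h
    omega
  have hvanish : ∀ x ∉ Set.range (fun j : ℕ => 2 * j + 1), u x = 0 := by
    intro x hx
    have hev : Even x := by
      rcases Nat.even_or_odd x with h | h
      · exact h
      · exfalso
        rcases h with ⟨j, hj⟩
        exact hx ⟨j, by show 2 * j + 1 = x; omega⟩
    rw [hudef]
    simp only []
    rw [hev.neg_one_pow]
    ring
  have hF2 : HasSum (u ∘ fun j : ℕ => 2 * j + 1) (1 - Real.cos (π * z)) :=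
    (hinj.hasSum_iff hvanish).mpr hE'
  apply hF2.congr_fun
  intro j
  have hodd : ((-1 : ℝ)) ^ (((2 * j + 1 : ℕ) : ℤ)) = -1 := by
    rw [zpow_natCast]
    exact Odd.neg_one_pow ⟨j, by omega⟩
  have hodd' : ((-1 : ℝ)) ^ (2 * j + 1 : ℕ) = -1 := Odd.neg_one_pow ⟨j, by omega⟩
  simp only [Function.comp_apply, hudef, hRdef]
  rw [hodd, hodd']
  have hden : z ^ 2 - (2 * (j : ℝ) + 1) ^ 2 ≠ 0 := by
    have h1 : (1 : ℝ) ≤ (2 * (j : ℝ) + 1) ^ 2 := by nlinarith [Nat.cast_nonneg (α := ℝ) j]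
    nlinarith
  push_cast
  rw [show z ^ 2 - (2 * (j : ℝ) + 1) ^ 2 = -((2 * (j : ℝ) + 1) ^ 2 - z ^ 2) by ring]
  simp only [mul_neg, div_neg]
  ring

end Stmt11Aux

end StmtAux

set_option maxHeartbeats 800000 in
/-- The series identity
`Σ_{k=0}^∞ 1 / ((2k+1)²n² - 1) = (π/(4n)) tan(π/(2n))` for every integer `n ≥ 2`. -/
theorem stmt_11 (n : ℕ) (hn : 2 ≤ n) :
    ∑' k : ℕ, 1 / ((2 * (k : ℝ) + 1) ^ 2 * (n : ℝ) ^ 2 - 1)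
      = (π / (4 * n)) * Real.tan (π / (2 * n)) := by
  have hπ : (0 : ℝ) < π := Real.pi_pos
  have hN2 : (2 : ℝ) ≤ (n : ℝ) := by exact_mod_cast hn
  have hN0 : (0 : ℝ) < (n : ℝ) := by linarith
  set z : ℝ := 1 / (n : ℝ) with hzdef
  have hz0 : 0 < z := by positivity
  have hz : z ≤ 1 / 2 := by
    rw [hzdef]
    rw [div_le_div_iff₀ hN0 (by norm_num)]
    linarith
  have h := Stmt11Aux.hasSum_aux z hz0 hz
  -- sin (π z) > 0
  have hθpos : 0 < π * z := by positivity
  have hθlt : π * z < π := by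
    have : z < 1 := by linarith
    nlinarith
  have hsinpos : 0 < Real.sin (π * z) := Real.sin_pos_of_pos_of_lt_pi hθpos hθlt
  set C : ℝ := π * z / (4 * Real.sin (π * z)) with hCdef
  have h2 := h.mul_left C
  have hterm : ∀ j : ℕ, C * (4 * Real.sin (π * z) * z / (π * ((2 * (j : ℝ) + 1) ^ 2 - z ^ 2)))
      = 1 / ((2 * (j : ℝ) + 1) ^ 2 * (n : ℝ) ^ 2 - 1) := by
    intro j
    have hden : (2 * (j : ℝ) + 1) ^ 2 - z ^ 2 ≠ 0 := by
      have h1 : (1 : ℝ) ≤ (2 * (j : ℝ) + 1) ^ 2 := by nlinarith [Nat.cast_nonneg (α := ℝ) j]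
      nlinarith
    have hden2 : (2 * (j : ℝ) + 1) ^ 2 * (n : ℝ) ^ 2 - 1 ≠ 0 := by
      have h1 : (1 : ℝ) ≤ (2 * (j : ℝ) + 1) ^ 2 := by nlinarith [Nat.cast_nonneg (α := ℝ) j]
      nlinarith
    have hz2 : z ^ 2 * (n : ℝ) ^ 2 = 1 := by
      rw [hzdef]; field_simp
    have hd1 : (4 * Real.sin (π * z)) * (π * ((2 * (j : ℝ) + 1) ^ 2 - z ^ 2)) ≠ 0 :=
      mul_ne_zero (by positivity) (mul_ne_zero Real.pi_ne_zero hden)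
    rw [hCdef, div_mul_div_comm, div_eq_div_iff hd1 hden2]
    linear_combination (4 * π * Real.sin (π * z) * (2 * (j : ℝ) + 1) ^ 2) * hz2
  have h3 : HasSum (fun j : ℕ => 1 / ((2 * (j : ℝ) + 1) ^ 2 * (n : ℝ) ^ 2 - 1))
      (C * (1 - Real.cos (π * z))) := by
    apply h2.congr_fun
    intro j
    exact (hterm j).symm
  rw [h3.tsum_eq]
  -- final trigonometric identity
  have hhalf : π / (2 * (n : ℝ)) = (π * z) / 2 := by
    rw [hzdef, mul_one_div, div_div, mul_comm (n : ℝ) 2]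
  rw [hhalf]
  set θ : ℝ := π * z with hθdef
  have hcos2 : 0 < Real.cos (θ / 2) := by
    apply Real.cos_pos_of_mem_Ioo
    constructor
    · linarith
    · linarith
  have hsin2 : 0 < Real.sin (θ / 2) := by
    apply Real.sin_pos_of_pos_of_lt_pi
    · linarith
    · linarith
  have hsin_eq : Real.sin θ = 2 * Real.sin (θ / 2) * Real.cos (θ / 2) := by
    rw [show θ = 2 * (θ / 2) by ring, Real.sin_two_mul]
    ring_nf
  have hcos_eq : Real.cos θ = 1 - 2 * Real.sin (θ / 2) ^ 2 := by
    rw [show θ = 2 * (θ / 2) by ring, Real.cos_two_mul]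
    have := Real.sin_sq_add_cos_sq (θ / 2)
    ring_nf
    ring_nf at this
    nlinarith
  rw [Real.tan_eq_sin_div_cos, hCdef]
  rw [hsin_eq, hcos_eq]
  have hπn : π / (4 * (n : ℝ)) = π * z / 4 := by
    rw [hzdef, mul_one_div, div_div, mul_comm (n : ℝ) 4]
  rw [hπn]
  field_simp [hsin2.ne', hcos2.ne']
  ring
end

section
/- Let a, b, c > 0, let κ ∈ ℝ, let ε > 0, and set η = (a·c)/((a+b)·(b+c)). Define S(ℓ) = κ·ln(ℓ/ε). Then 0 < η < 1 and S(a+b) + S(b+c) − η·(S(a) + S(c)) − (1−η)·(S(b) + S(a+b+c)) = κ·h(η), where h(η) = −η·ln(η) − (1−η)·ln(1−η); in particular the left-hand side does not depend on ε. -/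
/-!
Write `η = x / (x + y)` with `x = ac` and `y = b(a+b+c)`; this is possible because
`(a+b)(b+c) = ac + b(a+b+c)`, so that `1 - η = y / (x + y)`. The weights of the combination sum
to zero, so the cutoff `ε` cancels, and expanding `ln η` and `ln (1 - η)` into logarithms of
the interval lengths turns `κ h(η)` into the left-hand side.
-/

open Real

theorem neg_mul_log_sub_mul_log_one_sub_of_eq_div {η x y z : ℝ} (hx : 0 < x) (hy : 0 < y)
    (hz : x + y = z) (hη : η = x / z) :
    -η * log η - (1 - η) * log (1 - η) = log z - η * log x - (1 - η) * log y := by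
  have hz0 : z ≠ 0 := by linarith
  have hη' : 1 - η = y / z := by rw [hη, ← hz]; field_simp; ring
  have hlog : log η = log x - log z := by rw [hη, log_div hx.ne' hz0]
  have hlog' : log (1 - η) = log y - log z := by rw [hη', log_div hy.ne' hz0]
  rw [hlog, hlog']
  ring

/-- The line version of the vector fixed-point constant: for interval lengths `a, b, c` with
cross-ratio `η = ac/((a+b)(b+c))` and entanglement entropy `S(ℓ) = κ ln(ℓ/ε)`, one has
`0 < η < 1` and `S(a+b) + S(b+c) - η(S(a)+S(c)) - (1-η)(S(b)+S(a+b+c)) = κ h(η)`,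
where `h` is the binary entropy function. -/
theorem stmt_13 (a b c κ ε : ℝ) (ha : 0 < a) (hb : 0 < b) (hc : 0 < c) (hε : 0 < ε)
    (η : ℝ) (hη : η = (a * c) / ((a + b) * (b + c)))
    (S : ℝ → ℝ) (hS : ∀ ℓ : ℝ, S ℓ = κ * Real.log (ℓ / ε)) :
    0 < η ∧ η < 1 ∧
    S (a + b) + S (b + c) - η * (S a + S c) - (1 - η) * (S b + S (a + b + c))
      = κ * (-η * Real.log η - (1 - η) * Real.log (1 - η)) := by
  have hx : 0 < a * c := by positivity
  have hy : 0 < b * (a + b + c) := by positivity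
  have hsplit : a * c + b * (a + b + c) = (a + b) * (b + c) := by ring
  have hS' : ∀ ℓ, 0 < ℓ → S ℓ = κ * log ℓ - κ * log ε := fun ℓ hℓ => by
    rw [hS, log_div hℓ.ne' hε.ne']; ring
  refine ⟨hη ▸ by positivity, ?_, ?_⟩
  · rw [hη, div_lt_one (by positivity), ← hsplit]
    linarith
  · rw [neg_mul_log_sub_mul_log_one_sub_of_eq_div hx hy hsplit hη,
      log_mul (by positivity) (by positivity), log_mul ha.ne' hc.ne',
      log_mul hb.ne' (by positivity),
      hS' _ ha, hS' _ hb, hS' _ hc, hS' (a + b) (by positivity), hS' (b + c) (by positivity),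
      hS' (a + b + c) (by positivity)]
    ring
end

section
/- Let a, b, c > 0 with a + b + c < 2π, let κ ∈ ℝ, let ε > 0, and set η = (sin(a/2)·sin(c/2))/(sin((a+b)/2)·sin((b+c)/2)). Define S(ℓ) = κ·ln(2·sin(ℓ/2)/ε) for 0 < ℓ < 2π. Then 0 < η < 1 and S(a+b) + S(b+c) − η·(S(a) + S(c)) − (1−η)·(S(b) + S(a+b+c)) = κ·h(η), where h(η) = −η·ln(η) − (1−η)·ln(1−η). -/
open Real

/-!
The addition formulas give the three-term identity
`sin((a+b)/2) sin((b+c)/2) = sin(a/2) sin(c/2) + sin(b/2) sin((a+b+c)/2)`,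
so `η = x / (x + y)` and `1 - η = y / (x + y)` with `x = sin(a/2) sin(c/2)` and
`y = sin(b/2) sin((a+b+c)/2)`, both positive. The cutoff terms `log (2/ε)` cancel because the
coefficients of `S` sum to zero, and what remains is `κ (log (x+y) - η log x - (1-η) log y)`,
which is `κ h(η)`.
-/

theorem Real.sin_add_mul_sin_add (x y z : ℝ) :
    sin (x + y) * sin (y + z) = sin x * sin z + sin y * sin (x + y + z) := by
  simp only [sin_add, cos_add]
  linear_combination sin x * sin z * sin_sq_add_cos_sq y

theorem Real.sin_half_pos {ℓ : ℝ} (h₀ : 0 < ℓ) (h₁ : ℓ < 2 * π) : 0 < sin (ℓ / 2) :=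
  sin_pos_of_pos_of_lt_pi (by linarith) (by linarith)

theorem Real.binary_entropy_div_add {x y : ℝ} (hx : 0 < x) (hy : 0 < y) :
    -(x / (x + y)) * log (x / (x + y)) - (1 - x / (x + y)) * log (1 - x / (x + y))
      = log (x + y) - x / (x + y) * log x - (1 - x / (x + y)) * log y := by
  have hxy : 0 < x + y := add_pos hx hy
  have h1 : 1 - x / (x + y) = y / (x + y) := by field_simp; ring
  have hsum : x / (x + y) + y / (x + y) = 1 := by field_simp
  rw [h1, log_div hx.ne' hxy.ne', log_div hy.ne' hxy.ne']
  linear_combination log (x + y) * hsum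

/-- The circle version of the vector fixed-point constant: for arc lengths `a, b, c` with
`a + b + c < 2π`, chordal cross-ratio `η = sin(a/2)sin(c/2)/(sin((a+b)/2)sin((b+c)/2))` and
entanglement entropy `S(ℓ) = κ ln(2 sin(ℓ/2)/ε)` for `0 < ℓ < 2π`, one has `0 < η < 1` and
`S(a+b) + S(b+c) - η(S(a)+S(c)) - (1-η)(S(b)+S(a+b+c)) = κ h(η)`,
where `h` is the binary entropy function. -/
theorem stmt_14 (a b c κ ε : ℝ) (ha : 0 < a) (hb : 0 < b) (hc : 0 < c)
    (habc : a + b + c < 2 * π) (hε : 0 < ε)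
    (η : ℝ)
    (hη : η = (Real.sin (a / 2) * Real.sin (c / 2)) /
      (Real.sin ((a + b) / 2) * Real.sin ((b + c) / 2)))
    (S : ℝ → ℝ) (hS : ∀ ℓ : ℝ, 0 < ℓ → ℓ < 2 * π → S ℓ = κ * Real.log (2 * Real.sin (ℓ / 2) / ε)) :
    0 < η ∧ η < 1 ∧
    S (a + b) + S (b + c) - η * (S a + S c) - (1 - η) * (S b + S (a + b + c))
      = κ * (-η * Real.log η - (1 - η) * Real.log (1 - η)) := by
  have hS' : ∀ ℓ, 0 < ℓ → ℓ < 2 * π → S ℓ = κ * (log (2 / ε) + log (sin (ℓ / 2))) :=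
    fun ℓ h₀ h₁ => by
      rw [hS ℓ h₀ h₁, mul_div_right_comm, log_mul (by positivity) (sin_half_pos h₀ h₁).ne']
  have hsa := sin_half_pos ha (by linarith)
  have hsb := sin_half_pos hb (by linarith)
  have hsc := sin_half_pos hc (by linarith)
  have hsabc := sin_half_pos (by linarith) habc
  set x := sin (a / 2) * sin (c / 2)
  set y := sin (b / 2) * sin ((a + b + c) / 2)
  have hx : 0 < x := mul_pos hsa hsc
  have hy : 0 < y := mul_pos hsb hsabc
  have hden : sin ((a + b) / 2) * sin ((b + c) / 2) = x + y := by
    have := sin_add_mul_sin_add (a / 2) (b / 2) (c / 2)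
    simp only [← add_div] at this
    exact this
  rw [hden] at hη
  subst hη
  refine ⟨div_pos hx (add_pos hx hy), (div_lt_one (add_pos hx hy)).2 (by linarith), ?_⟩
  rw [binary_entropy_div_add hx hy, ← hden, log_mul hsa.ne' hsc.ne', log_mul hsb.ne' hsabc.ne',
    log_mul (sin_half_pos (by linarith) (by linarith)).ne'
      (sin_half_pos (by linarith) (by linarith)).ne',
    hS' _ (by linarith) (by linarith), hS' _ (by linarith) (by linarith), hS' a ha (by linarith),
    hS' c hc (by linarith), hS' b hb (by linarith), hS' _ (by linarith) habc]
  ring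
end

section
/- Let f : ℝ → ℝ be a twice continuously differentiable 2π-periodic function and let c ∈ ℝ. For t ∈ ℝ with |t|·sup_{θ}|f'(θ)| < 1, define the Schwarzian action I(t) = (2πc/24)·∫₀^{2π} [ (1 + t·f'(θ))² + ( t·f''(θ) / (1 + t·f'(θ)) )² − 1 ] dθ. Then I(0) = 0, the first derivative of I at t = 0 vanishes, and lim_{t→0} I(t)/t² = (2πc/24)·∫₀^{2π} ( f'(θ)² + f''(θ)² ) dθ. -/
open Real Filter

set_option maxHeartbeats 1000000 in
/-- Small-`t` behavior of the Schwarzian action of the family of circle diffeomorphisms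
`φ_t(θ) = θ + t f(θ)`: writing
`I(t) = (2πc/24) ∫₀^{2π} ((1 + t f'(θ))² + (t f''(θ)/(1 + t f'(θ)))² - 1) dθ`
for `|t| · sup_θ |f'(θ)| < 1`, one has `I(0) = 0`, `I'(0) = 0`, and
`lim_{t→0} I(t)/t² = (2πc/24) ∫₀^{2π} (f'(θ)² + f''(θ)²) dθ`. -/
theorem stmt_15 (f : ℝ → ℝ) (hf : ContDiff ℝ 2 f)
    (hper : Function.Periodic f (2 * π)) (c : ℝ) (I : ℝ → ℝ)
    (hI : ∀ t : ℝ, |t| * (⨆ θ : ℝ, |deriv f θ|) < 1 →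
      I t = (2 * π * c / 24) * ∫ θ in (0 : ℝ)..(2 * π),
        ((1 + t * deriv f θ) ^ 2 +
          (t * deriv (deriv f) θ / (1 + t * deriv f θ)) ^ 2 - 1)) :
    I 0 = 0 ∧ deriv I 0 = 0 ∧
    Tendsto (fun t : ℝ => I t / t ^ 2) (nhdsWithin 0 {(0 : ℝ)}ᶜ)
      (nhds ((2 * π * c / 24) * ∫ θ in (0 : ℝ)..(2 * π),
        ((deriv f θ) ^ 2 + (deriv (deriv f) θ) ^ 2))) := by
  have hπ : (0:ℝ) < 2 * π := by positivity
  have hdiff : Differentiable ℝ f := hf.differentiable (by norm_num)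
  have hdf : ContDiff ℝ 1 (deriv f) := by
    rw [show (2 : WithTop ℕ∞) = 1 + 1 by norm_num, contDiff_succ_iff_deriv] at hf
    exact hf.2.2
  have hg : Continuous (deriv f) := hdf.continuous
  have hh : Continuous (deriv (deriv f)) := hdf.continuous_deriv le_rfl
  have hgper : Function.Periodic (deriv f) (2 * π) := fun θ => by
    calc deriv f (θ + 2 * π) = deriv (fun x => f (x + 2 * π)) θ :=
          (deriv_comp_add_const f (2 * π) θ).symm
      _ = deriv f θ := by rw [funext fun x => hper x]
  have hhper : Function.Periodic (deriv (deriv f)) (2 * π) := fun θ => by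
    calc deriv (deriv f) (θ + 2 * π) = deriv (fun x => deriv f (x + 2 * π)) θ :=
          (deriv_comp_add_const (deriv f) (2 * π) θ).symm
      _ = deriv (deriv f) θ := by rw [funext fun x => hgper x]
  set M := ⨆ θ : ℝ, |deriv f θ| with hM
  have hbddg : BddAbove (Set.range fun θ => |deriv f θ|) :=
    ((hgper.comp abs).compact_of_continuous hπ.ne' hg.abs).bddAbove
  have hMb : ∀ θ, |deriv f θ| ≤ M := fun θ => le_ciSup hbddg θ
  have hM0 : (0:ℝ) ≤ M := (abs_nonneg _).trans (hMb 0)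
  set B := ⨆ θ : ℝ, |deriv (deriv f) θ| with hB
  have hbddh : BddAbove (Set.range fun θ => |deriv (deriv f) θ|) :=
    ((hhper.comp abs).compact_of_continuous hπ.ne' hh.abs).bddAbove
  have hBb : ∀ θ, |deriv (deriv f) θ| ≤ B := fun θ => le_ciSup hbddh θ
  have hB0 : (0:ℝ) ≤ B := (abs_nonneg _).trans (hBb 0)
  set ε : ℝ := (2 * (M + 1))⁻¹ with hε
  have hε0 : 0 < ε := by positivity
  have h1 : ∀ t : ℝ, |t| ≤ ε → |t| * M ≤ 1/2 := by
    intro t ht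
    have hM1 : (0:ℝ) < M + 1 := by linarith
    calc |t| * M ≤ ε * (M + 1) :=
          mul_le_mul ht (by linarith) hM0 hε0.le
      _ = 1/2 := by rw [hε]; field_simp
  have hden : ∀ t : ℝ, |t| ≤ ε → ∀ θ, 1/2 ≤ 1 + t * deriv f θ := by
    intro t ht θ
    have h2 : |t * deriv f θ| ≤ 1/2 := by
      rw [abs_mul]
      exact (mul_le_mul_of_nonneg_left (hMb θ) (abs_nonneg t)).trans (h1 t ht)
    have := abs_le.mp h2
    linarith [this.1]
  have hdenne : ∀ t : ℝ, |t| ≤ ε → ∀ θ, (1 + t * deriv f θ) ≠ 0 := by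
    intro t ht θ; have := hden t ht θ; linarith
  have hpt : ∀ t : ℝ, |t| ≤ ε → ∀ θ,
      ((1 + t * deriv f θ) ^ 2 + (t * deriv (deriv f) θ / (1 + t * deriv f θ)) ^ 2 - 1)
      = 2 * t * deriv f θ
        + t ^ 2 * ((deriv f θ) ^ 2 + (deriv (deriv f) θ) ^ 2 / (1 + t * deriv f θ) ^ 2) := by
    intro t ht θ
    have h0 := hdenne t ht θ
    field_simp
    ring
  have hint1 : ∀ t : ℝ, (∫ θ in (0:ℝ)..(2*π), 2 * t * deriv f θ) = 0 := by
    intro t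
    rw [intervalIntegral.integral_const_mul,
      intervalIntegral.integral_deriv_eq_sub (fun x _ => hdiff x)
        (hg.intervalIntegrable _ _)]
    have h2 : f (2 * π) = f 0 := by simpa using hper 0
    rw [h2, sub_self, mul_zero]
  set J : ℝ → ℝ := fun t => ∫ θ in (0:ℝ)..(2*π),
    ((deriv f θ) ^ 2 + (deriv (deriv f) θ) ^ 2 / (1 + t * deriv f θ) ^ 2) with hJ
  have hcont : ∀ t : ℝ, |t| ≤ ε → Continuous
      (fun θ => (deriv f θ) ^ 2 + (deriv (deriv f) θ) ^ 2 / (1 + t * deriv f θ) ^ 2) := by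
    intro t ht
    exact (hg.pow 2).add ((hh.pow 2).div
      ((continuous_const.add (continuous_const.mul hg)).pow 2)
      (fun θ => pow_ne_zero _ (hdenne t ht θ)))
  have hIt : ∀ t : ℝ, |t| ≤ ε → I t = (2 * π * c / 24) * (t ^ 2 * J t) := by
    intro t ht
    have hlt : |t| * M < 1 := lt_of_le_of_lt (h1 t ht) (by norm_num)
    rw [hI t hlt]
    congr 1
    rw [intervalIntegral.integral_congr (g := fun θ => 2 * t * deriv f θ
        + t ^ 2 * ((deriv f θ) ^ 2 + (deriv (deriv f) θ) ^ 2 / (1 + t * deriv f θ) ^ 2))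
        (fun θ _ => hpt t ht θ),
      intervalIntegral.integral_add (f := fun θ => 2 * t * deriv f θ)
          (g := fun θ => t ^ 2 * ((deriv f θ) ^ 2 + (deriv (deriv f) θ) ^ 2 / (1 + t * deriv f θ) ^ 2))
        ((continuous_const.mul hg).intervalIntegrable _ _)
        ((continuous_const.mul (hcont t ht)).intervalIntegrable _ _),
      hint1 t, zero_add, intervalIntegral.integral_const_mul]
  set K : ℝ := 12 * M * B ^ 2 * (2 * π) with hK
  have hK0 : 0 ≤ K := by have := pi_pos; positivity
  have h0ε : |(0:ℝ)| ≤ ε := by simpa using hε0.le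
  have hJbound : ∀ t : ℝ, |t| ≤ ε → |J t - J 0| ≤ K * |t| := by
    intro t ht
    have hsub : J t - J 0 = ∫ θ in (0:ℝ)..(2*π),
        (((deriv f θ) ^ 2 + (deriv (deriv f) θ) ^ 2 / (1 + t * deriv f θ) ^ 2)
          - ((deriv f θ) ^ 2 + (deriv (deriv f) θ) ^ 2 / (1 + 0 * deriv f θ) ^ 2)) := by
      rw [intervalIntegral.integral_sub ((hcont t ht).intervalIntegrable _ _)
        ((hcont 0 h0ε).intervalIntegrable _ _)]
    rw [hsub]
    have hbd : ∀ θ ∈ Set.uIoc (0:ℝ) (2*π),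
        ‖((deriv f θ) ^ 2 + (deriv (deriv f) θ) ^ 2 / (1 + t * deriv f θ) ^ 2)
          - ((deriv f θ) ^ 2 + (deriv (deriv f) θ) ^ 2 / (1 + 0 * deriv f θ) ^ 2)‖
          ≤ 12 * M * B ^ 2 * |t| := by
      intro θ _
      set a := t * deriv f θ with ha
      set h2 := deriv (deriv f) θ with hh2
      have hA : |a| ≤ |t| * M := by
        rw [ha, abs_mul]; exact mul_le_mul_of_nonneg_left (hMb θ) (abs_nonneg t)
      have hA2 : |a| ≤ 1/2 := hA.trans (h1 t ht)
      have hd : 1/2 ≤ 1 + a := hden t ht θ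
      have hd0 : (1 + a) ≠ 0 := by linarith
      have hB2 : h2 ^ 2 ≤ B ^ 2 := by
        rw [← sq_abs h2]; exact pow_le_pow_left₀ (abs_nonneg _) (hBb θ) 2
      have e1 : (deriv f θ) ^ 2 + h2 ^ 2 / (1 + a) ^ 2
          - ((deriv f θ) ^ 2 + h2 ^ 2 / (1 + 0 * deriv f θ) ^ 2)
          = h2 ^ 2 * ((1:ℝ) - (1 + a) ^ 2) / (1 + a) ^ 2 := by
        field_simp
        ring
      rw [Real.norm_eq_abs, e1, abs_div, abs_mul, abs_of_nonneg (sq_nonneg (1 + a)),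
        abs_of_nonneg (sq_nonneg h2)]
      have habs : |(1:ℝ) - (1 + a) ^ 2| ≤ 5/2 * (|t| * M) := by
        have e2 : (1:ℝ) - (1 + a) ^ 2 = -(2 * a + a ^ 2) := by ring
        rw [e2, abs_neg]
        calc |2 * a + a ^ 2| ≤ |2 * a| + |a ^ 2| := abs_add_le _ _
          _ = 2 * |a| + |a| * |a| := by rw [abs_mul, abs_two, abs_pow, sq]
          _ ≤ 2 * |a| + (1/2) * |a| := by nlinarith [abs_nonneg a]
          _ = 5/2 * |a| := by ring
          _ ≤ 5/2 * (|t| * M) := by linarith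
      rw [div_le_iff₀ (by positivity : (0:ℝ) < (1 + a) ^ 2)]
      have hd2 : (1:ℝ)/4 ≤ (1 + a) ^ 2 := by nlinarith
      nlinarith [mul_le_mul hB2 habs (abs_nonneg _) (sq_nonneg B), abs_nonneg t,
        sq_nonneg B, mul_nonneg (mul_nonneg hM0 (sq_nonneg B)) (abs_nonneg t)]
    calc |(∫ θ in (0:ℝ)..(2*π), _)| ≤ 12 * M * B ^ 2 * |t| * |2 * π - 0| :=
          intervalIntegral.norm_integral_le_of_norm_le_const hbd
      _ = K * |t| := by
          rw [hK, sub_zero, abs_of_pos (by positivity : (0:ℝ) < 2 * π)]; ring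
  have hI0 : I 0 = 0 := by rw [hIt 0 h0ε]; ring
  have hJ0 : J 0 = ∫ θ in (0:ℝ)..(2*π), ((deriv f θ) ^ 2 + (deriv (deriv f) θ) ^ 2) := by
    simp [hJ]
  have hsmall : ∀ᶠ t : ℝ in nhds 0, |t| ≤ ε := by
    filter_upwards [Metric.ball_mem_nhds (0:ℝ) hε0] with t ht
    rw [Metric.mem_ball, Real.dist_eq, sub_zero] at ht
    exact ht.le
  have hJtend : Tendsto J (nhds 0) (nhds (J 0)) := by
    rw [← tendsto_sub_nhds_zero_iff]
    apply squeeze_zero_norm' (a := fun t => K * |t|)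
    · filter_upwards [hsmall] with t ht
      simpa using hJbound t ht
    · have : Tendsto (fun t : ℝ => K * |t|) (nhds 0) (nhds (K * |(0:ℝ)|)) :=
        (continuous_const.mul continuous_abs).tendsto 0
      simpa using this
  refine ⟨hI0, ?_, ?_⟩
  · have hO : (fun t : ℝ => I t) =O[nhds 0] fun t => t ^ 2 := by
      rw [Asymptotics.isBigO_iff]
      refine ⟨|2 * π * c / 24| * (|J 0| + K * ε), ?_⟩
      filter_upwards [hsmall] with t ht
      have hJt : |J t| ≤ |J 0| + K * ε := by
        have h3 := hJbound t ht
        have h4 : K * |t| ≤ K * ε := mul_le_mul_of_nonneg_left ht hK0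
        calc |J t| = |J 0 + (J t - J 0)| := by ring_nf
          _ ≤ |J 0| + |J t - J 0| := abs_add_le _ _
          _ ≤ |J 0| + K * ε := by linarith
      rw [hIt t ht]
      rw [Real.norm_eq_abs, Real.norm_eq_abs, abs_mul, abs_mul, abs_pow]
      calc |2 * π * c / 24| * (|t| ^ 2 * |J t|)
          ≤ |2 * π * c / 24| * (|t| ^ 2 * (|J 0| + K * ε)) := by
            apply mul_le_mul_of_nonneg_left _ (abs_nonneg _)
            exact mul_le_mul_of_nonneg_left hJt (by positivity)
        _ = |2 * π * c / 24| * (|J 0| + K * ε) * |t| ^ 2 := by ring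
    have hlittle : (fun t : ℝ => t ^ 2) =o[nhds (0:ℝ)] fun t => t := by
      rw [Asymptotics.isLittleO_iff_tendsto (fun t ht => by simp [ht])]
      have e : (fun t : ℝ => t ^ 2 / t) = fun t => t := by
        funext t
        rcases eq_or_ne t 0 with h | h
        · simp [h]
        · rw [sq, mul_div_assoc, div_self h, mul_one]
      rw [e]; exact tendsto_id
    have hderiv : HasDerivAt I 0 0 := by
      rw [hasDerivAt_iff_isLittleO]
      simpa [hI0] using hO.trans_isLittleO hlittle
    exact hderiv.deriv
  · rw [← hJ0]
    have heq : ∀ᶠ t : ℝ in nhdsWithin 0 {(0:ℝ)}ᶜ,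
        (2 * π * c / 24) * J t = I t / t ^ 2 := by
      filter_upwards [self_mem_nhdsWithin,
        eventually_nhdsWithin_of_eventually_nhds hsmall] with t ht hts
      have ht0 : t ≠ 0 := ht
      rw [hIt t hts]
      field_simp
    exact (Tendsto.congr' heq
      (tendsto_const_nhds.mul (hJtend.mono_left nhdsWithin_le_nhds)))
end
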